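/- arXiv:1009.5281 — 10 statements merged into one kernel-verified Lean document; each statement's English description precedes it below -/
import Mathlib

section
/- Let r ≥ 1 and let f be an arithmetic function, and set f' = μ * f (Dirichlet convolution with the Möbius function). Then the following three assertions are equivalent: (i) f is r-even; (ii) f(n) = Σ_{d | gcd(n,r)} f'(d) for every n ≥ 1; (iii) f'(n) = 0 for every n ≥ 1 with n ∤ r. -/
open Finset

/-- The discrete Fourier transform of an `r`-periodic arithmetic function:
`f̂(n) = Σ_{k=1}^{r} f(k) exp(−2πikn/r)`. -/
noncomputable def dft (r : ℕ) (f : ℕ → ℂ) (n : ℕ) : ℂ :=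
  ∑ k ∈ Finset.Icc 1 r, f k * Complex.exp (-(2 * (Real.pi : ℂ) * Complex.I * (k : ℂ) * (n : ℂ) / (r : ℂ)))

/-- The Ramanujan sum `c_q(n) = Σ_{1≤k≤q, gcd(k,q)=1} exp(2πikn/q)`. -/
noncomputable def ram (q n : ℕ) : ℂ :=
  ∑ k ∈ (Finset.Icc 1 q).filter (fun k => Nat.gcd k q = 1),
    Complex.exp (2 * (Real.pi : ℂ) * Complex.I * (k : ℂ) * (n : ℂ) / (q : ℂ))

/-- `f` is `r`-even: `f(gcd(n,r)) = f(n)` for all `n ≥ 1`. -/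
def IsREven (r : ℕ) (f : ℕ → ℂ) : Prop :=
  ∀ n : ℕ, 1 ≤ n → f (Nat.gcd n r) = f n

/-- `f' = μ * f`, the Dirichlet convolution of the Möbius function with `f`. -/
noncomputable def moeConv (f : ℕ → ℂ) (n : ℕ) : ℂ :=
  ∑ d ∈ n.divisors, ((ArithmeticFunction.moebius d : ℤ) : ℂ) * f (n / d)

/-- `g` is multiplicative: `g(1) = 1` and `g(mn) = g(m)g(n)` whenever `gcd(m,n) = 1`. -/
def IsMult (g : ℕ → ℂ) : Prop :=
  g 1 = 1 ∧ ∀ m n : ℕ, 1 ≤ m → 1 ≤ n → Nat.Coprime m n → g (m * n) = g m * g n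

lemma inv_sum (f : ℕ → ℂ) : ∀ n > 0, ∑ d ∈ n.divisors, moeConv f d = f n := by
  rw [ArithmeticFunction.sum_eq_iff_sum_mul_moebius_eq]
  intro n hn
  rw [Nat.sum_divisorsAntidiagonal (fun d e => ((ArithmeticFunction.moebius d : ℤ) : ℂ) * f e)]
  rfl


/-- Characterization of `r`-even functions: (i) `f` is `r`-even ⟺
(ii) `f(n) = Σ_{d | gcd(n,r)} f'(d)` for all `n ≥ 1` ⟺
(iii) `f'(n) = 0` for all `n ≥ 1` with `n ∤ r`, where `f' = μ * f`. -/
theorem dft_stmt_0 (r : ℕ) (hr : 1 ≤ r) (f : ℕ → ℂ) :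
    (IsREven r f ↔ ∀ n : ℕ, 1 ≤ n → f n = ∑ d ∈ (Nat.gcd n r).divisors, moeConv f d) ∧
    ((∀ n : ℕ, 1 ≤ n → f n = ∑ d ∈ (Nat.gcd n r).divisors, moeConv f d) ↔
      ∀ n : ℕ, 1 ≤ n → ¬ n ∣ r → moeConv f n = 0) := by
  have hgcd : ∀ n : ℕ, 1 ≤ n → 0 < Nat.gcd n r := fun n hn =>
    Nat.gcd_pos_of_pos_left r hn
  constructor
  · constructor
    · intro hEven n hn
      rw [inv_sum f _ (hgcd n hn)]
      exact (hEven n hn).symm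
    · intro h n hn
      rw [h n hn, inv_sum f _ (hgcd n hn)]
  · constructor
    · intro h
      intro n
      induction n using Nat.strong_induction_on with
      | _ n IH =>
        intro hn hndvd
        have hn0 : 0 < n := hn
        have hinv := inv_sum f n hn0
        rw [← Nat.cons_self_properDivisors hn0.ne', Finset.sum_cons] at hinv
        have hsub : (Nat.gcd n r).divisors ⊆ n.properDivisors := by
          intro d hd
          rw [Nat.mem_divisors] at hd
          have hdn : d ∣ n := hd.1.trans (Nat.gcd_dvd_left n r)
          have hdr : d ∣ r := hd.1.trans (Nat.gcd_dvd_right n r)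
          rw [Nat.mem_properDivisors]
          refine ⟨hdn, lt_of_le_of_ne (Nat.le_of_dvd hn0 hdn) ?_⟩
          rintro rfl; exact hndvd hdr
        have hzero : ∀ x ∈ n.properDivisors, x ∉ (Nat.gcd n r).divisors →
            moeConv f x = 0 := by
          intro x hx hxn
          rw [Nat.mem_properDivisors] at hx
          have hx1 : 1 ≤ x := Nat.pos_of_dvd_of_pos hx.1 hn0
          apply IH x hx.2 hx1
          intro hxr
          exact hxn (Nat.mem_divisors.mpr ⟨Nat.dvd_gcd hx.1 hxr, (hgcd n hn).ne'⟩)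
        have : ∑ d ∈ (Nat.gcd n r).divisors, moeConv f d
            = ∑ d ∈ n.properDivisors, moeConv f d :=
          Finset.sum_subset hsub hzero
        have hfn := h n hn
        rw [this] at hfn
        linear_combination hinv + hfn
    · intro h n hn
      rw [← inv_sum f n hn]
      refine (Finset.sum_subset ?_ ?_).symm
      · exact Nat.divisors_subset_of_dvd (Nat.one_le_iff_ne_zero.mp hn) (Nat.gcd_dvd_left n r)
      · intro x hx hxn
        rw [Nat.mem_divisors] at hx
        have hx1 : 1 ≤ x := Nat.pos_of_dvd_of_pos hx.1 hn
        apply h x hx1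
        intro hxr
        exact hxn (Nat.mem_divisors.mpr ⟨Nat.dvd_gcd hx.1 hxr, (hgcd n hn).ne'⟩)
end

section
/- For all n, r ∈ ℕ≥1: Σ_{d|n} c_r(d) μ(n/d) = n·μ(r/n) if n | r, and Σ_{d|n} c_r(d) μ(n/d) = 0 if n ∤ r. -/
open Finset
open Complex

lemma sum_moebius_div (m : ℕ) :
    (∑ e ∈ m.divisors, (ArithmeticFunction.moebius e : ℤ)) = if m = 1 then 1 else 0 := by
  have h : (ArithmeticFunction.moebius * ArithmeticFunction.zeta : ArithmeticFunction ℤ) m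
      = (1 : ArithmeticFunction ℤ) m := by
    rw [ArithmeticFunction.moebius_mul_coe_zeta]
  rwa [ArithmeticFunction.coe_mul_zeta_apply, ArithmeticFunction.one_apply] at h

lemma geom_rou (m d : ℕ) (hm : 1 ≤ m) :
    (∑ j ∈ Finset.Icc 1 m, Complex.exp (2 * (Real.pi : ℂ) * Complex.I * (j : ℂ) * (d : ℂ) / (m : ℂ)))
      = if m ∣ d then (m : ℂ) else 0 := by
  have hm0 : (m : ℂ) ≠ 0 := Nat.cast_ne_zero.2 (by omega)
  have h2 : (2 : ℂ) * Real.pi * Complex.I ≠ 0 := by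
    simp [Real.pi_ne_zero, Complex.I_ne_zero]
  set ζ : ℂ := Complex.exp (2 * (Real.pi : ℂ) * Complex.I * (d : ℂ) / (m : ℂ)) with hζ
  have hterm : ∀ j : ℕ, Complex.exp (2 * (Real.pi : ℂ) * Complex.I * (j : ℂ) * (d : ℂ) / (m : ℂ)) = ζ ^ j := by
    intro j
    rw [hζ, ← Complex.exp_nat_mul]
    ring_nf
  have hone : ζ = 1 ↔ m ∣ d := by
    rw [hζ, Complex.exp_eq_one_iff]
    constructor
    · rintro ⟨k, hk⟩
      have hk' : 2 * (Real.pi : ℂ) * Complex.I * (d : ℂ) = (k : ℂ) * (2 * Real.pi * Complex.I) * (m : ℂ) := by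
        field_simp at hk
        linear_combination (2 * (Real.pi : ℂ) * Complex.I) * hk
      have h3 : (2:ℂ)*Real.pi*Complex.I * (d:ℂ) = (2:ℂ)*Real.pi*Complex.I * ((k:ℂ)*(m:ℂ)) := by
        linear_combination hk'
      have h4 : (d : ℂ) = (k : ℂ) * (m : ℂ) := mul_left_cancel₀ h2 h3
      have h5 : (d : ℤ) = k * m := by exact_mod_cast h4
      have : (m : ℤ) ∣ (d : ℤ) := ⟨k, by linarith⟩
      exact_mod_cast this
    · rintro ⟨c, rfl⟩
      refine ⟨c, ?_⟩
      push_cast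
      field_simp
  simp only [hterm]
  by_cases hd : m ∣ d
  · rw [if_pos hd]
    simp [hone.2 hd, Nat.card_Icc]
  · have hz : ζ ≠ 1 := fun h => hd (hone.1 h)
    have hzm : ζ ^ m = 1 := by
      rw [hζ, ← Complex.exp_nat_mul, Complex.exp_eq_one_iff]
      exact ⟨d, by push_cast; field_simp⟩
    have : ∑ j ∈ Finset.Icc 1 m, ζ ^ j = ζ * ∑ i ∈ Finset.range m, ζ ^ i := by
      rw [← Finset.Ico_add_one_right_eq_Icc, Finset.sum_Ico_eq_sum_range]
      simp only [Nat.add_sub_cancel, pow_add, pow_one, Nat.succ_sub_one]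
      rw [Finset.mul_sum]
    rw [this, geom_sum_eq hz, hzm]
    simp [hd]

lemma ram_eq (r d : ℕ) (hr : 1 ≤ r) :
    ram r d = ∑ e ∈ r.divisors, ((ArithmeticFunction.moebius e : ℤ) : ℂ) *
      (if (r / e) ∣ d then ((r / e : ℕ) : ℂ) else 0) := by
  have hr0 : r ≠ 0 := by omega
  rw [ram, Finset.sum_filter]
  have key : ∀ k ∈ Finset.Icc 1 r,
      (if Nat.gcd k r = 1 then Complex.exp (2 * (Real.pi : ℂ) * Complex.I * (k : ℂ) * (d : ℂ) / (r : ℂ)) else 0)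
      = ∑ e ∈ r.divisors, (if e ∣ k then ((ArithmeticFunction.moebius e : ℤ) : ℂ)
          * Complex.exp (2 * (Real.pi : ℂ) * Complex.I * (k : ℂ) * (d : ℂ) / (r : ℂ)) else 0) := by
    intro k hk
    rw [← Finset.sum_filter]
    have hset : r.divisors.filter (· ∣ k) = (Nat.gcd k r).divisors := by
      ext e
      simp only [Finset.mem_filter, Nat.mem_divisors, Nat.dvd_gcd_iff]
      constructor
      · rintro ⟨⟨h1, _⟩, h2⟩
        exact ⟨⟨h2, h1⟩, Nat.gcd_ne_zero_right hr0⟩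
      · rintro ⟨⟨h1, h2⟩, _⟩
        exact ⟨⟨h2, hr0⟩, h1⟩
    rw [hset, ← Finset.sum_mul]
    have hcast : (∑ e ∈ (Nat.gcd k r).divisors, ((ArithmeticFunction.moebius e : ℤ) : ℂ))
        = if Nat.gcd k r = 1 then 1 else 0 := by
      rw [← Int.cast_sum, sum_moebius_div]
      split_ifs <;> simp
    rw [hcast]
    split_ifs <;> simp
  rw [Finset.sum_congr rfl key, Finset.sum_comm]
  refine Finset.sum_congr rfl fun e he => ?_
  obtain ⟨hed, -⟩ := Nat.mem_divisors.1 he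
  have he1 : 1 ≤ e := Nat.pos_of_dvd_of_pos hed (by omega)
  have hre : 1 ≤ r / e := Nat.one_le_div_iff (by omega) |>.2 (Nat.le_of_dvd (by omega) hed)
  rw [← Finset.sum_filter, ← Finset.mul_sum]
  congr 1
  have hbij : ∑ k ∈ (Finset.Icc 1 r).filter (fun k => e ∣ k),
      Complex.exp (2 * (Real.pi : ℂ) * Complex.I * (k : ℂ) * (d : ℂ) / (r : ℂ))
      = ∑ j ∈ Finset.Icc 1 (r / e),
      Complex.exp (2 * (Real.pi : ℂ) * Complex.I * (j : ℂ) * (d : ℂ) / ((r / e : ℕ) : ℂ)) := by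
    refine Finset.sum_nbij' (fun k => k / e) (fun j => e * j) ?_ ?_ ?_ ?_ ?_
    · intro k hk
      simp only [Finset.mem_filter, Finset.mem_Icc] at hk
      obtain ⟨⟨h1, h2⟩, h3⟩ := hk
      simp only [Finset.mem_Icc]
      exact ⟨Nat.one_le_div_iff (by omega) |>.2 (Nat.le_of_dvd (by omega) h3),
        Nat.div_le_div_right h2⟩
    · intro j hj
      simp only [Finset.mem_Icc] at hj
      simp only [Finset.mem_filter, Finset.mem_Icc]
      refine ⟨⟨by nlinarith, ?_⟩, Dvd.intro j rfl⟩
      calc e * j ≤ e * (r / e) := Nat.mul_le_mul_left e hj.2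
        _ = r := Nat.mul_div_cancel' hed
    · intro k hk
      simp only [Finset.mem_filter] at hk
      exact Nat.mul_div_cancel' hk.2
    · intro j hj
      exact Nat.mul_div_cancel_left j (by omega)
    · intro k hk
      simp only [Finset.mem_filter, Finset.mem_Icc] at hk
      obtain ⟨⟨h1, h2⟩, c, rfl⟩ := hk
      congr 1
      have hre0 : ((r / e : ℕ) : ℂ) ≠ 0 := Nat.cast_ne_zero.2 (by omega)
      have hrc : (r : ℂ) = (e : ℂ) * ((r / e : ℕ) : ℂ) := by
        exact_mod_cast congrArg (Nat.cast : ℕ → ℂ) (Nat.mul_div_cancel' hed).symm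
      simp only [Nat.mul_div_cancel_left c (by omega : 0 < e)]
      rw [hrc]
      push_cast
      have he0 : (e : ℂ) ≠ 0 := Nat.cast_ne_zero.2 (by omega)
      field_simp
  rw [hbij, geom_rou (r / e) d hre]

lemma inner_moebius (m n : ℕ) (hn : 1 ≤ n) :
    (∑ d ∈ n.divisors.filter (fun d => m ∣ d), ArithmeticFunction.moebius (n / d))
      = if m = n then (1 : ℤ) else 0 := by
  have hn0 : n ≠ 0 := by omega
  by_cases hmn : m ∣ n
  · have hm1 : 1 ≤ m := Nat.pos_of_dvd_of_pos hmn (by omega)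
    have hnm0 : n / m ≠ 0 := (Nat.div_pos (Nat.le_of_dvd (by omega) hmn) hm1).ne'
    have hstep : (∑ d ∈ n.divisors.filter (fun d => m ∣ d), ArithmeticFunction.moebius (n / d))
        = ∑ t ∈ (n / m).divisors, ArithmeticFunction.moebius ((n / m) / t) := by
      refine Finset.sum_nbij' (fun d => d / m) (fun t => m * t) ?_ ?_ ?_ ?_ ?_
      · intro d hd
        simp only [Finset.mem_filter, Nat.mem_divisors] at hd
        obtain ⟨⟨h1, -⟩, c, rfl⟩ := hd
        simp only [Nat.mul_div_cancel_left c (by omega : 0 < m), Nat.mem_divisors]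
        exact ⟨Nat.dvd_div_of_mul_dvd h1, hnm0⟩
      · intro t ht
        rw [Nat.mem_divisors] at ht
        simp only [Finset.mem_filter, Nat.mem_divisors]
        refine ⟨⟨?_, hn0⟩, Dvd.intro t rfl⟩
        calc m * t ∣ m * (n / m) := mul_dvd_mul_left m ht.1
          _ = n := Nat.mul_div_cancel' hmn
      · intro d hd
        simp only [Finset.mem_filter] at hd
        exact Nat.mul_div_cancel' hd.2
      · intro t ht
        exact Nat.mul_div_cancel_left t (by omega)
      · intro d hd
        simp only [Finset.mem_filter] at hd
        obtain ⟨-, c, rfl⟩ := hd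
        simp only [Nat.mul_div_cancel_left c (by omega : 0 < m), Nat.div_div_eq_div_mul]
    rw [hstep, Nat.sum_div_divisors (n / m) (fun t => (ArithmeticFunction.moebius t : ℤ)),
      sum_moebius_div]
    have hiff : n / m = 1 ↔ m = n := by
      have hmm : n / m * m = n := Nat.div_mul_cancel hmn
      constructor
      · intro h; rw [h, one_mul] at hmm; omega
      · rintro rfl; exact Nat.div_self (by omega)
    rw [if_congr hiff rfl rfl]
  · have hempty : n.divisors.filter (fun d => m ∣ d) = ∅ := by
      rw [Finset.filter_eq_empty_iff]
      intro d hd hmd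
      exact hmn (hmd.trans (Nat.mem_divisors.1 hd).1)
    have hne : m ≠ n := fun h => hmn (h ▸ dvd_refl n)
    simp [hempty, hne]

/-- `Σ_{d|n} c_r(d) μ(n/d) = n·μ(r/n)` if `n | r`, and `0` if `n ∤ r`. -/
theorem dft_stmt_1 (n r : ℕ) (hn : 1 ≤ n) (hr : 1 ≤ r) :
    (∑ d ∈ n.divisors, ram r d * ((ArithmeticFunction.moebius (n / d) : ℤ) : ℂ)) =
      if n ∣ r then (n : ℂ) * ((ArithmeticFunction.moebius (r / n) : ℤ) : ℂ) else 0 := by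
  have hr0 : r ≠ 0 := by omega
  have step1 : (∑ d ∈ n.divisors, ram r d * ((ArithmeticFunction.moebius (n / d) : ℤ) : ℂ))
      = ∑ e ∈ r.divisors, ∑ d ∈ n.divisors,
        ((ArithmeticFunction.moebius e : ℤ) : ℂ) *
          (if (r / e) ∣ d then ((r / e : ℕ) : ℂ) else 0) *
          ((ArithmeticFunction.moebius (n / d) : ℤ) : ℂ) := by
    rw [Finset.sum_comm]
    refine Finset.sum_congr rfl fun d hd => ?_
    rw [ram_eq r d hr, Finset.sum_mul]
  rw [step1]
  have step2 : ∀ e ∈ r.divisors,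
      (∑ d ∈ n.divisors, ((ArithmeticFunction.moebius e : ℤ) : ℂ) *
        (if (r / e) ∣ d then ((r / e : ℕ) : ℂ) else 0) *
        ((ArithmeticFunction.moebius (n / d) : ℤ) : ℂ))
      = ((ArithmeticFunction.moebius e : ℤ) : ℂ) * ((r / e : ℕ) : ℂ) *
        (if r / e = n then 1 else 0) := by
    intro e he
    have : ∀ d ∈ n.divisors, ((ArithmeticFunction.moebius e : ℤ) : ℂ) *
        (if (r / e) ∣ d then ((r / e : ℕ) : ℂ) else 0) *
        ((ArithmeticFunction.moebius (n / d) : ℤ) : ℂ)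
        = if (r / e) ∣ d then ((ArithmeticFunction.moebius e : ℤ) : ℂ) * ((r / e : ℕ) : ℂ) *
            ((ArithmeticFunction.moebius (n / d) : ℤ) : ℂ) else 0 := by
      intro d hd; split_ifs <;> ring
    rw [Finset.sum_congr rfl this, ← Finset.sum_filter, ← Finset.mul_sum]
    congr 1
    have := inner_moebius (r / e) n hn
    have hcast : (∑ d ∈ n.divisors.filter (fun d => (r / e) ∣ d),
        ((ArithmeticFunction.moebius (n / d) : ℤ) : ℂ)) = if r / e = n then (1 : ℂ) else 0 := by
      rw [← Int.cast_sum, this]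
      split_ifs <;> simp
    exact hcast
  rw [Finset.sum_congr rfl step2]
  have step3 : ∀ e ∈ r.divisors,
      ((ArithmeticFunction.moebius e : ℤ) : ℂ) * ((r / e : ℕ) : ℂ) * (if r / e = n then 1 else 0)
      = (fun m => ((ArithmeticFunction.moebius (r / m) : ℤ) : ℂ) * (m : ℂ) *
          (if m = n then 1 else 0)) (r / e) := by
    intro e he
    obtain ⟨hed, -⟩ := Nat.mem_divisors.1 he
    simp only
    rw [Nat.div_div_self hed hr0]
  rw [Finset.sum_congr rfl step3]
  beta_reduce
  rw [Nat.sum_div_divisors r (fun m => ((ArithmeticFunction.moebius (r / m) : ℤ) : ℂ) * (m : ℂ) * (if m = n then 1 else 0))]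
  simp only [mul_ite, mul_one, mul_zero]
  rw [Finset.sum_ite_eq' r.divisors n
    (fun e => ((ArithmeticFunction.moebius (r / e) : ℤ) : ℂ) * (e : ℂ))]
  by_cases hd : n ∣ r
  · rw [if_pos (Nat.mem_divisors.2 ⟨hd, hr0⟩), if_pos hd]; ring
  · rw [if_neg (fun hc => hd (Nat.mem_divisors.1 hc).1), if_neg hd]
end

section
/- Let r ≥ 1 and let f be an r-even arithmetic function with discrete Fourier transform f̂. Then for every n ≥ 1, f(n) = (1/r) Σ_{d|r} f̂(d) c_{r/d}(n) (inverse discrete Fourier transform formula). -/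
open Finset

noncomputable def EE (r : ℕ) (t : ℤ) : ℂ :=
  Complex.exp (2 * (Real.pi : ℂ) * Complex.I * (t : ℂ) / (r : ℂ))

lemma EE_one (r : ℕ) (hr : 1 ≤ r) (s : ℤ) : EE r (r * s) = 1 := by
  have hr0 : (r : ℂ) ≠ 0 := Nat.cast_ne_zero.mpr (by omega)
  unfold EE
  rw [show 2 * (Real.pi : ℂ) * Complex.I * ((r * s : ℤ) : ℂ) / (r : ℂ)
      = (s : ℂ) * (2 * (Real.pi : ℂ) * Complex.I) by push_cast; field_simp]
  exact Complex.exp_int_mul_two_pi_mul_I s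

lemma EE_add (r : ℕ) (a b : ℤ) : EE r (a + b) = EE r a * EE r b := by
  unfold EE
  rw [← Complex.exp_add]
  congr 1
  push_cast
  ring

lemma EE_congr (r : ℕ) (hr : 1 ≤ r) {a b : ℤ} (h : (a : ZMod r) = (b : ZMod r)) :
    EE r a = EE r b := by
  rw [ZMod.intCast_eq_intCast_iff] at h
  obtain ⟨s, hs⟩ := h.dvd
  have hab : a = b + r * (-s) := by rw [mul_neg]; linarith
  rw [hab, EE_add, EE_one r hr, mul_one]

lemma EE_pow (r : ℕ) (t : ℤ) (m : ℕ) : EE r (m * t) = (EE r t) ^ m := by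
  unfold EE
  rw [← Complex.exp_nat_mul]
  congr 1
  push_cast
  ring

lemma EE_sum (r : ℕ) (hr : 1 ≤ r) (t : ℤ) :
    ∑ m ∈ Icc 1 r, EE r (m * t) = if (r : ℤ) ∣ t then (r : ℂ) else 0 := by
  have key : ∀ m ∈ Icc 1 r, EE r (m * t) = (EE r t) ^ m := fun m _ => EE_pow r t m
  rw [Finset.sum_congr rfl key]
  split_ifs with h
  · obtain ⟨s, hs⟩ := h
    have h1 : EE r t = 1 := by rw [hs]; exact EE_one r hr s
    simp [h1, Nat.card_Icc]
  · set z := EE r t with hz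
    have hzr : z ^ r = 1 := by
      rw [← EE_pow]
      exact EE_one r hr t
    have hz1 : z ≠ 1 := by
      intro hcon
      apply h
      rw [hz] at hcon
      unfold EE at hcon
      rw [Complex.exp_eq_one_iff] at hcon
      obtain ⟨k, hk⟩ := hcon
      have hr0 : (r : ℂ) ≠ 0 := Nat.cast_ne_zero.mpr (by omega)
      have hpi : (2 * (Real.pi : ℂ) * Complex.I) ≠ 0 := by
        simp [Complex.I_ne_zero, Real.pi_ne_zero, Complex.ofReal_ne_zero]
      field_simp at hk
      have h2 : (2 * (Real.pi : ℂ) * Complex.I) * (t : ℂ)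
          = (2 * (Real.pi : ℂ) * Complex.I) * ((r : ℂ) * (k : ℂ)) := by
        linear_combination (2 * (Real.pi : ℂ) * Complex.I) * hk
      have h3 : (t : ℂ) = ((r * k : ℤ) : ℂ) := by
        have := mul_left_cancel₀ hpi h2
        push_cast
        exact this
      exact ⟨k, by exact_mod_cast h3⟩
    have hre : ∑ m ∈ Icc 1 r, z ^ m = z * ∑ m ∈ Finset.range r, z ^ m := by
      rw [← Finset.Ico_add_one_right_eq_Icc, Finset.sum_Ico_eq_sum_range]
      simp only [Nat.succ_sub_one, Nat.add_sub_cancel, pow_add, pow_one, Finset.mul_sum]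
    rw [hre, geom_sum_eq hz1, hzr]
    simp

lemma gcd_mod_left (a r : ℕ) : Nat.gcd (a % r) r = Nat.gcd a r := by
  conv_rhs => rw [Nat.gcd_comm, Nat.gcd_rec]

lemma gcd_unit_mul (r : ℕ) [NeZero r] (u : (ZMod r)ˣ) (x : ZMod r) :
    Nat.gcd ((↑u * x : ZMod r)).val r = Nat.gcd x.val r := by
  rw [ZMod.val_mul, gcd_mod_left,
    Nat.Coprime.gcd_mul_left_cancel _ (ZMod.val_coe_unit_coprime u)]

lemma sum_Icc_zmod (r : ℕ) [NeZero r] (g : ZMod r → ℂ) :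
    ∑ k ∈ Icc 1 r, g (k : ZMod r) = ∑ x : ZMod r, g x := by
  have hr : 1 ≤ r := Nat.one_le_iff_ne_zero.mpr (NeZero.ne r)
  refine Finset.sum_nbij' (fun k => (k : ZMod r)) (fun x => if x.val = 0 then r else x.val) ?_ ?_ ?_ ?_ ?_
  · intro a _; exact Finset.mem_univ _
  · intro x _
    simp only [Finset.mem_Icc]
    split_ifs with h
    · omega
    · exact ⟨by omega, le_of_lt (ZMod.val_lt x)⟩
  · intro k hk
    simp only [Finset.mem_Icc] at hk
    show (if (k : ZMod r).val = 0 then r else (k : ZMod r).val) = k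
    rw [ZMod.val_natCast]
    rcases eq_or_lt_of_le hk.2 with he | hl
    · subst he; simp
    · rw [Nat.mod_eq_of_lt hl, if_neg (by omega)]
  · intro x _
    show ((if x.val = 0 then r else x.val : ℕ) : ZMod r) = x
    by_cases h : x.val = 0
    · rw [if_pos h, ZMod.natCast_self]
      exact ((ZMod.val_eq_zero x).mp h).symm
    · rw [if_neg h, ZMod.natCast_val, ZMod.cast_id]
  · intro k _; rfl

/-- existence of a unit u with m ≡ u * gcd(m,r) mod r -/
lemma exists_unit (r : ℕ) (hr : 1 ≤ r) (m : ℕ) (hm1 : 1 ≤ m) :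
    ∃ u : (ZMod r)ˣ, (m : ZMod r) = (u : ZMod r) * (Nat.gcd m r : ZMod r) := by
  haveI : NeZero r := ⟨by omega⟩
  set d := Nat.gcd m r with hd
  have hdpos : 0 < d := Nat.gcd_pos_of_pos_left r hm1
  have hdr : d ∣ r := Nat.gcd_dvd_right m r
  have hdm : d ∣ m := Nat.gcd_dvd_left m r
  have hdvd : r / d ∣ r := Nat.div_dvd_of_dvd hdr
  have hcop : (m / d).Coprime (r / d) := Nat.coprime_div_gcd_div_gcd hdpos
  obtain ⟨u, hu⟩ := ZMod.unitsMap_surjective hdvd (ZMod.unitOfCoprime (m / d) hcop)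
  have h1 : ((u : ZMod r).cast : ZMod (r / d)) = ((m / d : ℕ) : ZMod (r / d)) := by
    have := congrArg (fun w : (ZMod (r/d))ˣ => (w : ZMod (r/d))) hu
    simpa [ZMod.unitsMap_def, ZMod.coe_unitOfCoprime] using this
  have h2 : ((u : ZMod r).val : ZMod (r / d)) = ((m / d : ℕ) : ZMod (r / d)) := by
    rw [ZMod.natCast_val]; exact h1
  have h3 : (u : ZMod r).val ≡ m / d [MOD r / d] :=
    (ZMod.natCast_eq_natCast_iff _ _ _).mp h2
  have h4 : (u : ZMod r).val * d ≡ (m / d) * d [MOD (r / d) * d] :=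
    Nat.ModEq.mul_right' d h3
  rw [Nat.div_mul_cancel hdr, Nat.div_mul_cancel hdm] at h4
  refine ⟨u, ?_⟩
  have h5 : ((m : ℕ) : ZMod r) = (((u : ZMod r).val * d : ℕ) : ZMod r) :=
    (ZMod.natCast_eq_natCast_iff _ _ _).mpr h4.symm
  rw [h5]
  push_cast
  rw [ZMod.natCast_val, ZMod.cast_id]

lemma dft_zmod (r : ℕ) [NeZero r] (hr : 1 ≤ r) (f : ℕ → ℂ) (hf : IsREven r f) (m : ℕ) :
    dft r f m = ∑ x : ZMod r, f (Nat.gcd x.val r) * EE r (-((x.val : ℤ) * m)) := by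
  rw [← sum_Icc_zmod r (fun x => f (Nat.gcd x.val r) * EE r (-((x.val : ℤ) * m)))]
  unfold dft
  refine Finset.sum_congr rfl fun k hk => ?_
  simp only [Finset.mem_Icc] at hk
  have h1 : f k = f (Nat.gcd ((k : ZMod r)).val r) := by
    rw [ZMod.val_natCast, gcd_mod_left, hf k hk.1]
  have h2 : Complex.exp (-(2 * (Real.pi : ℂ) * Complex.I * (k : ℂ) * (m : ℂ) / (r : ℂ)))
      = EE r (-((((k : ZMod r)).val : ℤ) * m)) := by
    have e1 : Complex.exp (-(2 * (Real.pi : ℂ) * Complex.I * (k : ℂ) * (m : ℂ) / (r : ℂ)))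
        = EE r (-((k : ℤ) * m)) := by
      unfold EE; congr 1; push_cast; ring
    rw [e1]
    refine EE_congr r hr ?_
    push_cast
    rw [ZMod.natCast_val, ZMod.cast_id]
  rw [h1, h2]

lemma dft_even (r : ℕ) [NeZero r] (hr : 1 ≤ r) (f : ℕ → ℂ) (hf : IsREven r f) (m : ℕ) (hm1 : 1 ≤ m) :
    dft r f m = dft r f (Nat.gcd m r) := by
  obtain ⟨u, hu⟩ := exists_unit r hr m hm1
  rw [dft_zmod r hr f hf m, dft_zmod r hr f hf (Nat.gcd m r)]
  refine (Fintype.sum_bijective (fun x : ZMod r => ((u⁻¹ : (ZMod r)ˣ) : ZMod r) * x)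
    (Units.mulLeft_bijective _) _ _ fun x => ?_).symm
  have hgcd : Nat.gcd (((u⁻¹ : (ZMod r)ˣ) : ZMod r) * x).val r = Nat.gcd x.val r :=
    gcd_unit_mul r u⁻¹ x
  rw [hgcd]
  congr 1
  refine EE_congr r hr ?_
  push_cast
  rw [ZMod.natCast_val, ZMod.cast_id, ZMod.natCast_val, ZMod.cast_id, hu]
  have huu : (u : ZMod r) * ((u⁻¹ : (ZMod r)ˣ) : ZMod r) = 1 := by
    rw [← Units.val_mul, mul_inv_cancel, Units.val_one]
  rw [show -((↑u⁻¹ : ZMod r) * x * (↑u * (Nat.gcd m r : ZMod r)))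
      = -((↑u * ↑u⁻¹) * (x * (Nat.gcd m r : ZMod r))) from by ring, huu, one_mul]
lemma icc_mod_inj (r k k' : ℕ) (h1 : 1 ≤ k) (h2 : k ≤ r) (h3 : 1 ≤ k') (h4 : k' ≤ r)
    (h : k % r = k' % r) : k = k' := by
  have e1 : k % r = if k = r then 0 else k := by
    rcases eq_or_lt_of_le h2 with he | hl
    · simp [he]
    · rw [if_neg (by omega), Nat.mod_eq_of_lt hl]
  have e2 : k' % r = if k' = r then 0 else k' := by
    rcases eq_or_lt_of_le h4 with he | hl
    · simp [he]
    · rw [if_neg (by omega), Nat.mod_eq_of_lt hl]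
  rw [e1, e2] at h
  split_ifs at h <;> omega

/-- IDFT formula: if `f` is `r`-even then `f(n) = (1/r) Σ_{d|r} f̂(d) c_{r/d}(n)`. -/
theorem dft_stmt_3 (r : ℕ) (hr : 1 ≤ r) (f : ℕ → ℂ) (hf : IsREven r f) (n : ℕ) (hn : 1 ≤ n) :
    f n = (1 / (r : ℂ)) * ∑ d ∈ r.divisors, dft r f d * ram (r / d) n := by
  haveI : NeZero r := ⟨by omega⟩
  have hrne : (r : ℂ) ≠ 0 := Nat.cast_ne_zero.mpr (by omega)
  have step1 : ∀ d ∈ r.divisors,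
      dft r f d * ram (r / d) n
        = ∑ j ∈ (Finset.Icc 1 (r / d)).filter (fun j => Nat.gcd j (r / d) = 1),
            dft r f d * EE r ((j : ℤ) * d * n) := by
    intro d hd
    rw [Nat.mem_divisors] at hd
    have hd1 : 1 ≤ d := Nat.one_le_iff_ne_zero.mpr (by rintro rfl; exact hd.2 (Nat.eq_zero_of_zero_dvd hd.1))
    have hmul : (d : ℂ) * ((r / d : ℕ) : ℂ) = (r : ℂ) := by
      rw [← Nat.cast_mul, Nat.mul_div_cancel' hd.1]
    have hq0 : ((r / d : ℕ) : ℂ) ≠ 0 := by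
      intro h0; rw [h0, mul_zero] at hmul; exact hrne hmul.symm
    unfold ram
    rw [Finset.mul_sum]
    refine Finset.sum_congr rfl fun j hj => ?_
    congr 1
    unfold EE
    congr 1
    rw [← hmul]
    have hd0 : (d : ℂ) ≠ 0 := Nat.cast_ne_zero.mpr (by omega)
    field_simp
    push_cast
    ring
  rw [Finset.sum_congr rfl step1, Finset.sum_sigma']
  have step2 : ∑ p ∈ (r.divisors.sigma fun d =>
        (Finset.Icc 1 (r / d)).filter (fun j => Nat.gcd j (r / d) = 1)),
        dft r f p.1 * EE r ((p.2 : ℤ) * p.1 * n)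
      = ∑ m ∈ Finset.Icc 1 r, dft r f (Nat.gcd m r) * EE r ((m : ℤ) * n) := by
    refine Finset.sum_nbij' (fun p => p.2 * p.1)
      (fun m => ⟨Nat.gcd m r, m / Nat.gcd m r⟩) ?_ ?_ ?_ ?_ ?_
    · rintro ⟨d, j⟩ hp
      simp only [Finset.mem_sigma, Nat.mem_divisors, Finset.mem_filter, Finset.mem_Icc] at hp
      obtain ⟨⟨hdr, hr0⟩, ⟨hj1, hjle⟩, hjcop⟩ := hp
      have hd1 : 1 ≤ d := Nat.one_le_iff_ne_zero.mpr (by rintro rfl; exact hr0 (Nat.eq_zero_of_zero_dvd hdr))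
      simp only [Finset.mem_Icc]
      constructor
      · exact Nat.one_le_iff_ne_zero.mpr (by positivity)
      · calc j * d ≤ (r / d) * d := Nat.mul_le_mul_right d hjle
          _ = r := Nat.div_mul_cancel hdr
    · intro m hm
      simp only [Finset.mem_Icc] at hm
      have hg : 0 < Nat.gcd m r := Nat.gcd_pos_of_pos_left r hm.1
      have hgdvd : Nat.gcd m r ∣ m := Nat.gcd_dvd_left m r
      have hgr : Nat.gcd m r ∣ r := Nat.gcd_dvd_right m r
      simp only [Finset.mem_sigma, Nat.mem_divisors, Finset.mem_filter, Finset.mem_Icc]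
      refine ⟨⟨hgr, by omega⟩, ⟨?_, ?_⟩, ?_⟩
      · exact Nat.one_le_div_iff hg |>.mpr (Nat.le_of_dvd (by omega) hgdvd)
      · exact Nat.div_le_div_right hm.2
      · exact Nat.coprime_div_gcd_div_gcd hg
    · rintro ⟨d, j⟩ hp
      simp only [Finset.mem_sigma, Nat.mem_divisors, Finset.mem_filter, Finset.mem_Icc] at hp
      obtain ⟨⟨hdr, hr0⟩, ⟨hj1, hjle⟩, hjcop⟩ := hp
      have hd1 : 1 ≤ d := Nat.one_le_iff_ne_zero.mpr (by rintro rfl; exact hr0 (Nat.eq_zero_of_zero_dvd hdr))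
      have hgcd : Nat.gcd (j * d) r = d := by
        conv_lhs => rw [← Nat.div_mul_cancel hdr]
        rw [Nat.gcd_mul_right, hjcop, one_mul]
      have hjd : (j * d) / d = j := Nat.mul_div_cancel j (by omega)
      show (⟨Nat.gcd (j * d) r, (j * d) / Nat.gcd (j * d) r⟩ : (_ : ℕ) × ℕ) = ⟨d, j⟩
      rw [hgcd, hjd]
    · intro m hm
      exact Nat.div_mul_cancel (Nat.gcd_dvd_left m r)
    · rintro ⟨d, j⟩ hp
      simp only [Finset.mem_sigma, Nat.mem_divisors, Finset.mem_filter, Finset.mem_Icc] at hp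
      obtain ⟨⟨hdr, hr0⟩, ⟨hj1, hjle⟩, hjcop⟩ := hp
      have hgcd : Nat.gcd (j * d) r = d := by
        conv_lhs => rw [← Nat.div_mul_cancel hdr]
        rw [Nat.gcd_mul_right, hjcop, one_mul]
      rw [show ((j : ℤ) * d * n) = ((j * d : ℕ) : ℤ) * n by push_cast; ring, hgcd]
  rw [step2]
  have step3 : ∑ m ∈ Finset.Icc 1 r, dft r f (Nat.gcd m r) * EE r ((m : ℤ) * n)
      = ∑ m ∈ Finset.Icc 1 r, dft r f m * EE r ((m : ℤ) * n) := by
    refine Finset.sum_congr rfl fun m hm => ?_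
    simp only [Finset.mem_Icc] at hm
    rw [← dft_even r hr f hf m hm.1]
  rw [step3]
  have step4 : ∑ m ∈ Finset.Icc 1 r, dft r f m * EE r ((m : ℤ) * n)
      = ∑ k ∈ Finset.Icc 1 r, f k * (if (r : ℤ) ∣ ((n : ℤ) - k) then (r : ℂ) else 0) := by
    unfold dft
    calc ∑ m ∈ Finset.Icc 1 r, (∑ k ∈ Finset.Icc 1 r,
          f k * Complex.exp (-(2 * (Real.pi : ℂ) * Complex.I * (k : ℂ) * (m : ℂ) / (r : ℂ)))) * EE r ((m : ℤ) * n)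
        = ∑ m ∈ Finset.Icc 1 r, ∑ k ∈ Finset.Icc 1 r, f k * EE r ((m : ℤ) * ((n : ℤ) - k)) := by
          refine Finset.sum_congr rfl fun m _ => ?_
          rw [Finset.sum_mul]
          refine Finset.sum_congr rfl fun k _ => ?_
          rw [mul_assoc]
          congr 1
          have e1 : Complex.exp (-(2 * (Real.pi : ℂ) * Complex.I * (k : ℂ) * (m : ℂ) / (r : ℂ)))
              = EE r (-((k : ℤ) * m)) := by
            unfold EE; congr 1; push_cast; ring
          rw [e1, ← EE_add]
          congr 1
          ring
      _ = ∑ k ∈ Finset.Icc 1 r, f k * ∑ m ∈ Finset.Icc 1 r, EE r ((m : ℤ) * ((n : ℤ) - k)) := by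
          rw [Finset.sum_comm]
          exact Finset.sum_congr rfl fun k _ => (Finset.mul_sum _ _ _).symm
      _ = ∑ k ∈ Finset.Icc 1 r, f k * (if (r : ℤ) ∣ ((n : ℤ) - k) then (r : ℂ) else 0) := by
          exact Finset.sum_congr rfl fun k _ => by rw [EE_sum r hr]
  rw [step4]
  set k0 : ℕ := (n - 1) % r + 1 with hk0
  have hk0mem : k0 ∈ Finset.Icc 1 r := by
    simp only [Finset.mem_Icc]
    have := Nat.mod_lt (n - 1) (show 0 < r by omega)
    omega
  have hdvd0 : (r : ℤ) ∣ ((n : ℤ) - k0) := by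
    rw [hk0]
    clear hk0mem hk0
    obtain ⟨a, rfl⟩ : ∃ a, n = a + 1 := ⟨n - 1, by omega⟩
    simp only [Nat.add_sub_cancel]
    refine ⟨((a / r : ℕ) : ℤ), ?_⟩
    have h' : ((r * (a / r) + a % r : ℕ) : ℤ) = (a : ℤ) :=
      congrArg (Nat.cast : ℕ → ℤ) (Nat.div_add_mod a r)
    push_cast at h' ⊢
    linarith
  have hk0modeq : k0 % r = n % r := (Nat.modEq_iff_dvd (n := r)).mpr hdvd0
  have step5 : ∑ k ∈ Finset.Icc 1 r, f k * (if (r : ℤ) ∣ ((n : ℤ) - k) then (r : ℂ) else 0)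
      = f k0 * r := by
    rw [Finset.sum_eq_single_of_mem k0 hk0mem ?_, if_pos hdvd0]
    intro k hk hne
    simp only [Finset.mem_Icc] at hk
    rw [if_neg, mul_zero]
    intro hdvd
    have hmodeq : k % r = n % r := (Nat.modEq_iff_dvd (n := r)).mpr hdvd
    simp only [Finset.mem_Icc] at hk0mem
    exact hne (icc_mod_inj r k k0 hk.1 hk.2 hk0mem.1 hk0mem.2 (by omega))
  rw [step5]
  have hfk0 : f k0 = f n := by
    rw [← hf k0 (by omega), ← hf n hn]
    congr 1
    rw [← gcd_mod_left k0 r, ← gcd_mod_left n r, hk0modeq]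
  rw [hfk0]
  field_simp
end

section
/- Let r ≥ 1 and let f be an r-even arithmetic function with f' = μ * f. Then for every n ≥ 1, f̂(n) = Σ_{d | gcd(n,r)} d · f'(r/d). Moreover, with g = μ * f̂, one has g(n) = n · f'(r/n) for every n | r and g(n) = 0 for every n ∤ r. -/
set_option maxHeartbeats 1000000

open Finset

/-! ### Auxiliary lemmas -/

/-- Möbius inversion for `moeConv`. -/
lemma moe_inv (f : ℕ → ℂ) : ∀ m : ℕ, 0 < m → ∑ e ∈ m.divisors, moeConv f e = f m := by
  rw [ArithmeticFunction.sum_eq_iff_sum_smul_moebius_eq]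
  intro n hn
  rw [Nat.sum_divisorsAntidiagonal (fun a b => (ArithmeticFunction.moebius a : ℤ) • f b)]
  simp [moeConv, zsmul_eq_mul]

/-- The sum of the Möbius function over the divisors of `n`. -/
lemma moe_sum (n : ℕ) (hn : 0 < n) :
    ∑ d ∈ n.divisors, ((ArithmeticFunction.moebius d : ℤ) : ℂ) = if n = 1 then 1 else 0 := by
  have h := congrArg (fun g : ArithmeticFunction ℤ => g n) ArithmeticFunction.moebius_mul_coe_zeta
  simp only [ArithmeticFunction.mul_apply, ArithmeticFunction.one_apply] at h
  rw [Nat.sum_divisorsAntidiagonal (fun a b => (ArithmeticFunction.moebius a) * ((ArithmeticFunction.zeta : ArithmeticFunction ℕ) : ArithmeticFunction ℤ) b)] at h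
  have : ∀ d ∈ n.divisors, (ArithmeticFunction.moebius d) * ((ArithmeticFunction.zeta : ArithmeticFunction ℕ) : ArithmeticFunction ℤ) (n/d) = ArithmeticFunction.moebius d := by
    intro d hd
    have : n / d ≠ 0 := Nat.div_ne_zero_iff.2 ⟨(Nat.pos_of_mem_divisors hd).ne', Nat.le_of_dvd hn (Nat.mem_divisors.1 hd).1⟩
    simp [ArithmeticFunction.zeta_apply, this]
  rw [Finset.sum_congr rfl this] at h
  rw [← Int.cast_sum, h]
  split <;> simp

/-- Geometric sum of roots of unity. -/
lemma rootsum (m n : ℕ) (hm : 0 < m) :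
    ∑ j ∈ Finset.Icc 1 m, Complex.exp (-(2 * (Real.pi : ℂ) * Complex.I * (j : ℂ) * (n : ℂ) / (m : ℂ)))
      = if m ∣ n then (m : ℂ) else 0 := by
  set w : ℂ := Complex.exp (-(2 * (Real.pi : ℂ) * Complex.I * (n : ℂ) / (m : ℂ))) with hw
  have hmC : (m : ℂ) ≠ 0 := Nat.cast_ne_zero.2 hm.ne'
  have hterm : ∀ j : ℕ, Complex.exp (-(2 * (Real.pi : ℂ) * Complex.I * (j : ℂ) * (n : ℂ) / (m : ℂ))) = w ^ j := by
    intro j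
    rw [hw, ← Complex.exp_nat_mul]
    ring_nf
  have hwm : w ^ m = 1 := by
    rw [hw, ← Complex.exp_nat_mul]
    have : (m : ℂ) * -(2 * (Real.pi : ℂ) * Complex.I * (n : ℂ) / (m : ℂ)) = (-(n : ℤ) : ℤ) * (2 * (Real.pi : ℂ) * Complex.I) := by
      push_cast; field_simp
    rw [this, Complex.exp_int_mul_two_pi_mul_I]
  simp only [hterm]
  by_cases hdvd : m ∣ n
  · have hw1 : w = 1 := by
      obtain ⟨c, rfl⟩ := hdvd
      rw [hw]
      have : -(2 * (Real.pi : ℂ) * Complex.I * ((m * c : ℕ) : ℂ) / (m : ℂ)) = (-(c : ℤ) : ℤ) * (2 * (Real.pi : ℂ) * Complex.I) := by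
        push_cast; field_simp
      rw [this, Complex.exp_int_mul_two_pi_mul_I]
    simp [hw1, hdvd, Nat.card_Icc]
  · have hw1 : w ≠ 1 := by
      intro h
      rw [hw, Complex.exp_eq_one_iff] at h
      obtain ⟨k, hk⟩ := h
      have h2 : (2 * (Real.pi : ℂ) * Complex.I) * (-(n : ℂ)) = (2 * (Real.pi : ℂ) * Complex.I) * (k * m) := by
        field_simp at hk
        linear_combination (2 * (Real.pi : ℂ) * Complex.I) * hk
      have h3 : -(n : ℂ) = (k : ℂ) * m := mul_left_cancel₀ Complex.two_pi_I_ne_zero h2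
      have h4 : ((-(n : ℤ)) : ℂ) = ((k * m : ℤ) : ℂ) := by push_cast; exact_mod_cast h3
      have h5 : -(n : ℤ) = k * m := by exact_mod_cast h4
      have h6 : (m : ℤ) ∣ (n : ℤ) := ⟨-k, by linarith⟩
      exact hdvd (Int.natCast_dvd_natCast.1 h6)
    have : ∑ j ∈ Finset.Icc 1 m, w ^ j = w * ∑ j ∈ Finset.range m, w ^ j := by
      rw [Finset.mul_sum]
      rw [show Finset.Icc 1 m = Finset.Icc (0+1) ((m-1)+1) by congr 1; omega,
        ← Finset.map_add_right_Icc _ _ 1, Finset.sum_map]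
      simp only [addRightEmbedding_apply]
      rw [show Finset.Icc 0 (m-1) = Finset.range m by ext x; simp; omega]
      exact Finset.sum_congr rfl fun j _ => by rw [pow_succ]; ring
    rw [this, geom_sum_eq hw1, hwm]
    simp [hdvd]

lemma gcd_divisors (a b : ℕ) (hb : 0 < b) :
    (Nat.gcd a b).divisors = b.divisors.filter (· ∣ a) := by
  ext e
  simp only [Nat.mem_divisors, Finset.mem_filter, Nat.dvd_gcd_iff]
  have : Nat.gcd a b ≠ 0 := Nat.gcd_ne_zero_right hb.ne'
  exact ⟨fun h => ⟨⟨h.1.2, hb.ne'⟩, h.1.1⟩, fun h => ⟨⟨h.2, h.1.1⟩, this⟩⟩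

lemma filt (e r : ℕ) (he : e ∣ r) (he0 : 0 < e) :
    (Finset.Icc 1 r).filter (fun k => e ∣ k) = (Finset.Icc 1 (r/e)).image (fun j => e * j) := by
  ext k
  simp only [Finset.mem_filter, Finset.mem_Icc, Finset.mem_image]
  constructor
  · rintro ⟨⟨h1, h2⟩, j, rfl⟩
    refine ⟨j, ⟨?_, ?_⟩, rfl⟩
    · exact Nat.pos_of_ne_zero (by rintro rfl; simp at h1)
    · exact (Nat.le_div_iff_mul_le he0).2 (mul_comm e j ▸ h2)
  · rintro ⟨j, ⟨hj1, hj2⟩, rfl⟩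
    refine ⟨⟨Nat.mul_pos he0 hj1, ?_⟩, ⟨j, rfl⟩⟩
    calc e * j ≤ e * (r / e) := Nat.mul_le_mul_left e hj2
    _ = r := Nat.mul_div_cancel' he

noncomputable def Efun (r n k : ℕ) : ℂ :=
  Complex.exp (-(2 * (Real.pi : ℂ) * Complex.I * (k : ℂ) * (n : ℂ) / (r : ℂ)))

lemma part1 (r : ℕ) (hr : 1 ≤ r) (f : ℕ → ℂ) (hf : IsREven r f) (n : ℕ) (hn : 1 ≤ n) :
    dft r f n = ∑ d ∈ (Nat.gcd n r).divisors, (d : ℂ) * moeConv f (r / d) := by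
  have hr0 : 0 < r := hr
  calc dft r f n
      = ∑ k ∈ Finset.Icc 1 r, ∑ e ∈ r.divisors.filter (· ∣ k), moeConv f e * Efun r n k := by
        unfold dft Efun
        refine Finset.sum_congr rfl fun k hk => ?_
        have hk1 : 1 ≤ k := (Finset.mem_Icc.1 hk).1
        rw [← Finset.sum_mul, ← gcd_divisors k r hr0, moe_inv f _ (Nat.gcd_pos_of_pos_right k hr0),
          hf k hk1]
    _ = ∑ k ∈ Finset.Icc 1 r, ∑ e ∈ r.divisors, if e ∣ k then moeConv f e * Efun r n k else 0 := by
        refine Finset.sum_congr rfl fun k _ => ?_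
        rw [Finset.sum_filter]
    _ = ∑ e ∈ r.divisors, ∑ k ∈ (Finset.Icc 1 r).filter (fun k => e ∣ k), moeConv f e * Efun r n k := by
        rw [Finset.sum_comm]
        exact Finset.sum_congr rfl fun e _ => (Finset.sum_filter _ _).symm
    _ = ∑ e ∈ r.divisors, moeConv f e * (if (r/e) ∣ n then ((r/e : ℕ) : ℂ) else 0) := by
        refine Finset.sum_congr rfl fun e he => ?_
        obtain ⟨hed, -⟩ := Nat.mem_divisors.1 he
        have he0 : 0 < e := Nat.pos_of_mem_divisors he
        have hm0 : 0 < r / e := Nat.div_pos (Nat.le_of_dvd hr0 hed) he0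
        rw [filt e r hed he0, Finset.sum_image (fun x _ y _ h => by
          exact Nat.eq_of_mul_eq_mul_left he0 h)]
        rw [← rootsum (r/e) n hm0, Finset.mul_sum]
        refine Finset.sum_congr rfl fun j _ => ?_
        unfold Efun
        congr 2
        have hrem : (r : ℂ) = (e : ℂ) * ((r/e : ℕ) : ℂ) := by
          rw [← Nat.cast_mul, Nat.mul_div_cancel' hed]
        have heC : (e : ℂ) ≠ 0 := Nat.cast_ne_zero.2 he0.ne'
        have hmC : ((r/e : ℕ) : ℂ) ≠ 0 := Nat.cast_ne_zero.2 hm0.ne'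
        rw [hrem]
        push_cast
        field_simp
    _ = ∑ e ∈ r.divisors, (fun d => moeConv f (r/d) * (if d ∣ n then (d : ℂ) else 0)) (r/e) := by
        refine Finset.sum_congr rfl fun e he => ?_
        obtain ⟨hed, -⟩ := Nat.mem_divisors.1 he
        simp only [Nat.div_div_self hed hr0.ne']
    _ = ∑ d ∈ r.divisors, moeConv f (r/d) * (if d ∣ n then (d : ℂ) else 0) := by
        exact Nat.sum_div_divisors r (fun d => moeConv f (r/d) * (if d ∣ n then (d : ℂ) else 0))
    _ = ∑ d ∈ r.divisors.filter (· ∣ n), (d : ℂ) * moeConv f (r/d) := by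
        rw [Finset.sum_filter]
        exact Finset.sum_congr rfl fun d _ => by split <;> simp [mul_comm]
    _ = ∑ d ∈ (Nat.gcd n r).divisors, (d : ℂ) * moeConv f (r / d) := by
        rw [gcd_divisors n r hr0]

lemma inner_moe (n e : ℕ) (hn : 0 < n) (he : 0 < e) :
    ∑ d ∈ n.divisors.filter (fun d => e ∣ n / d), ((ArithmeticFunction.moebius d : ℤ) : ℂ)
      = if e = n then 1 else 0 := by
  by_cases hen : e ∣ n
  · have hne0 : 0 < n / e := Nat.div_pos (Nat.le_of_dvd hn hen) he
    have hset : n.divisors.filter (fun d => e ∣ n / d) = (n / e).divisors := by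
      ext d
      simp only [Finset.mem_filter, Nat.mem_divisors]
      constructor
      · rintro ⟨⟨hdn, -⟩, hednd⟩
        refine ⟨(Nat.dvd_div_iff_mul_dvd hen).2 ?_, hne0.ne'⟩
        exact mul_comm d e ▸ (Nat.dvd_div_iff_mul_dvd hdn).1 hednd
      · rintro ⟨hd, -⟩
        have hedn : e * d ∣ n := (Nat.dvd_div_iff_mul_dvd hen).1 hd
        have hdn : d ∣ n := (dvd_mul_left d e).trans hedn
        exact ⟨⟨hdn, hn.ne'⟩, (Nat.dvd_div_iff_mul_dvd hdn).2 (mul_comm e d ▸ hedn)⟩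
    rw [hset, moe_sum _ hne0]
    have hiff : n / e = 1 ↔ e = n := by
      have h := Nat.div_mul_cancel hen
      constructor
      · intro h1; rw [h1, one_mul] at h; exact h
      · rintro rfl; exact Nat.div_self hn
    by_cases hh : e = n
    · subst hh; simp [Nat.div_self hn]
    · rw [if_neg (fun c => hh (hiff.1 c)), if_neg hh]
  · have hset : n.divisors.filter (fun d => e ∣ n / d) = ∅ := by
      ext d
      simp only [Finset.mem_filter, Nat.mem_divisors, Finset.notMem_empty, iff_false]
      rintro ⟨⟨hdn, -⟩, hednd⟩
      exact hen (hednd.trans (Nat.div_dvd_of_dvd hdn))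
    have hne : e ≠ n := by rintro rfl; exact hen dvd_rfl
    simp [hset, hne]

lemma part23 (r : ℕ) (hr : 1 ≤ r) (f : ℕ → ℂ) (hf : IsREven r f) (n : ℕ) (hn : 1 ≤ n) :
    moeConv (dft r f) n = if n ∣ r then (n : ℂ) * moeConv f (r / n) else 0 := by
  have hr0 : 0 < r := hr
  calc moeConv (dft r f) n
      = ∑ d ∈ n.divisors, ((ArithmeticFunction.moebius d : ℤ) : ℂ) *
          ∑ e ∈ (Nat.gcd (n/d) r).divisors, (e : ℂ) * moeConv f (r / e) := by
        conv_lhs => rw [moeConv]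
        refine Finset.sum_congr rfl fun d hd => ?_
        have hd1 : 1 ≤ n / d :=
          Nat.div_pos (Nat.le_of_dvd hn (Nat.mem_divisors.1 hd).1) (Nat.pos_of_mem_divisors hd)
        rw [part1 r hr f hf (n/d) hd1]
    _ = ∑ d ∈ n.divisors, ∑ e ∈ r.divisors,
          (if e ∣ n/d then ((ArithmeticFunction.moebius d : ℤ) : ℂ) * ((e : ℂ) * moeConv f (r / e)) else 0) := by
        refine Finset.sum_congr rfl fun d _ => ?_
        rw [gcd_divisors (n/d) r hr0, Finset.sum_filter, Finset.mul_sum]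
        exact Finset.sum_congr rfl fun e _ => by split <;> simp
    _ = ∑ e ∈ r.divisors, ((e : ℂ) * moeConv f (r / e)) *
          ∑ d ∈ n.divisors.filter (fun d => e ∣ n / d), ((ArithmeticFunction.moebius d : ℤ) : ℂ) := by
        rw [Finset.sum_comm]
        refine Finset.sum_congr rfl fun e _ => ?_
        rw [Finset.sum_filter, Finset.mul_sum]
        exact Finset.sum_congr rfl fun d _ => by split <;> ring
    _ = ∑ e ∈ r.divisors, (if e = n then (e : ℂ) * moeConv f (r / e) else 0) := by
        refine Finset.sum_congr rfl fun e he => ?_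
        rw [inner_moe n e hn (Nat.pos_of_mem_divisors he)]
        split <;> simp
    _ = if n ∈ r.divisors then (n : ℂ) * moeConv f (r / n) else 0 :=
        Finset.sum_ite_eq' r.divisors n _
    _ = if n ∣ r then (n : ℂ) * moeConv f (r / n) else 0 := by
        simp [Nat.mem_divisors, hr0.ne']

/-- If `f` is `r`-even then `f̂(n) = Σ_{d | gcd(n,r)} d·f'(r/d)`; moreover with `g = μ * f̂`,
`g(n) = n·f'(r/n)` for `n | r` and `g(n) = 0` for `n ∤ r`. -/
theorem dft_stmt_4 (r : ℕ) (hr : 1 ≤ r) (f : ℕ → ℂ) (hf : IsREven r f) :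
    (∀ n : ℕ, 1 ≤ n → dft r f n = ∑ d ∈ (Nat.gcd n r).divisors, (d : ℂ) * moeConv f (r / d)) ∧
    (∀ n : ℕ, 1 ≤ n → n ∣ r → moeConv (dft r f) n = (n : ℂ) * moeConv f (r / n)) ∧
    (∀ n : ℕ, 1 ≤ n → ¬ n ∣ r → moeConv (dft r f) n = 0) := by
  refine ⟨fun n hn => part1 r hr f hf n hn, fun n hn hd => ?_, fun n hn hd => ?_⟩
  · rw [part23 r hr f hf n hn, if_pos hd]
  · rw [part23 r hr f hf n hn, if_neg hd]
end

section
/- Let r ≥ 1 and let f be an r-even arithmetic function with f' = μ * f. Then for every n ≥ 1, Σ_{d|n} f̂(d) = Σ_{d | gcd(n,r)} d · f'(r/d) · τ(n/d), where τ is the number-of-divisors function. -/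
open Finset

/-- Möbius inversion: since `moeConv f = μ * f`, summing it over divisors recovers `f`. -/
lemma sum_moeConv (f : ℕ → ℂ) (m : ℕ) (hm : 1 ≤ m) :
    ∑ e ∈ m.divisors, moeConv f e = f m := by
  refine (ArithmeticFunction.sum_eq_iff_sum_smul_moebius_eq
    (f := moeConv f) (g := f)).2 (fun k hk => ?_) m hm
  rw [moeConv, ← Nat.sum_divisorsAntidiagonal
    (fun a b => ((ArithmeticFunction.moebius a : ℤ) : ℂ) * f b)]
  exact Finset.sum_congr rfl fun x hx => by simp [zsmul_eq_mul]

/-- Full geometric sum of `m`-th roots of unity. -/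
lemma geom_root_sum (m n : ℕ) (hm : 1 ≤ m) :
    ∑ j ∈ Finset.Icc 1 m, Complex.exp (-(2 * (Real.pi : ℂ) * Complex.I * (j : ℂ) * (n : ℂ) / (m : ℂ)))
      = if m ∣ n then (m : ℂ) else 0 := by
  have hm0 : (m : ℂ) ≠ 0 := Nat.cast_ne_zero.2 (by omega)
  have hpi : (2 * (Real.pi : ℂ) * Complex.I) ≠ 0 := by
    simp [Real.pi_ne_zero, Complex.I_ne_zero]
  set z : ℂ := Complex.exp (-(2 * (Real.pi : ℂ) * Complex.I * (n : ℂ) / (m : ℂ))) with hz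
  have hterm : ∀ j : ℕ, Complex.exp (-(2 * (Real.pi : ℂ) * Complex.I * (j : ℂ) * (n : ℂ) / (m : ℂ))) = z ^ j := by
    intro j
    rw [hz, ← Complex.exp_nat_mul]
    ring_nf
  have hzm : z ^ m = 1 := by
    rw [hz, ← Complex.exp_nat_mul]
    have : (m : ℂ) * (-(2 * (Real.pi : ℂ) * Complex.I * (n : ℂ) / (m : ℂ)))
        = ((-(n:ℤ) : ℤ) : ℂ) * (2 * Real.pi * Complex.I) := by
      push_cast; field_simp
    rw [this, Complex.exp_int_mul_two_pi_mul_I]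
  simp only [hterm]
  by_cases hd : m ∣ n
  · obtain ⟨c, rfl⟩ := hd
    have hzone : z = 1 := by
      rw [hz]
      have : (-(2 * (Real.pi : ℂ) * Complex.I * ((m*c : ℕ) : ℂ) / (m : ℂ)))
          = ((-(c:ℤ) : ℤ) : ℂ) * (2 * Real.pi * Complex.I) := by
        push_cast; field_simp
      rw [this, Complex.exp_int_mul_two_pi_mul_I]
    rw [if_pos ⟨c, rfl⟩]
    simp [hzone]
  · rw [if_neg hd]
    have hz1 : z ≠ 1 := by
      intro h
      rw [hz, Complex.exp_eq_one_iff] at h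
      obtain ⟨k, hk⟩ := h
      apply hd
      have hnk : (n : ℤ) = -k * m := by
        have h2 : (n : ℂ) = ((-k * m : ℤ) : ℂ) := by
          field_simp at hk
          have h3 : (2 * (Real.pi : ℂ) * Complex.I) * (n : ℂ)
              = (2 * (Real.pi : ℂ) * Complex.I) * (((-k * m : ℤ) : ℂ)) := by
            push_cast
            linear_combination (-(2 * (Real.pi : ℂ) * Complex.I)) * hk
          exact mul_left_cancel₀ hpi h3
        exact_mod_cast h2
      exact Int.natCast_dvd_natCast.mp ⟨-k, by rw [hnk]; ring⟩
    have hIcc : ∑ j ∈ Finset.Icc 1 m, z ^ j = z * ∑ j ∈ Finset.range m, z ^ j := by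
      rw [Finset.mul_sum]
      rw [show Finset.Icc 1 m = Finset.Ico 1 (m+1) by rfl, Finset.sum_Ico_eq_sum_range]
      simp only [Nat.add_sub_cancel]
      exact Finset.sum_congr rfl fun i _ => by rw [pow_add, pow_one]
    rw [hIcc, geom_sum_eq hz1, hzm]
    simp

lemma divisors_gcd' (k r : ℕ) (hr : r ≠ 0) :
    (Nat.gcd k r).divisors = r.divisors.filter (· ∣ k) := by
  ext e
  simp only [Nat.mem_divisors, Finset.mem_filter, Nat.dvd_gcd_iff]
  constructor
  · rintro ⟨⟨h1, h2⟩, -⟩; exact ⟨⟨h2, hr⟩, h1⟩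
  · rintro ⟨⟨h2, -⟩, h1⟩; exact ⟨⟨h1, h2⟩, Nat.gcd_ne_zero_right hr⟩

/-- Evaluation of the DFT of an `r`-even function. -/
lemma dft_eq (r : ℕ) (hr : 1 ≤ r) (f : ℕ → ℂ) (hf : IsREven r f) (n : ℕ) :
    dft r f n = ∑ d ∈ r.divisors, moeConv f (r / d) * (if d ∣ n then (d : ℂ) else 0) := by
  have hr0 : r ≠ 0 := by omega
  calc dft r f n
      = ∑ k ∈ Finset.Icc 1 r, ∑ e ∈ r.divisors,
          (if e ∣ k then moeConv f e *
            Complex.exp (-(2 * (Real.pi : ℂ) * Complex.I * (k : ℂ) * (n : ℂ) / (r : ℂ))) else 0) := by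
        refine Finset.sum_congr rfl fun k hk => ?_
        rw [Finset.mem_Icc] at hk
        have h1 : f k = ∑ e ∈ (Nat.gcd k r).divisors, moeConv f e := by
          rw [sum_moeConv f _ (Nat.le_of_lt_succ (Nat.lt_succ_of_le (Nat.one_le_iff_ne_zero.2 (Nat.gcd_ne_zero_right hr0)))), hf k hk.1]
        rw [h1, divisors_gcd' k r hr0, Finset.sum_filter, Finset.sum_mul]
        exact Finset.sum_congr rfl fun e he => by split <;> simp
    _ = ∑ e ∈ r.divisors, moeConv f e *
          ∑ k ∈ (Finset.Icc 1 r).filter (e ∣ ·),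
            Complex.exp (-(2 * (Real.pi : ℂ) * Complex.I * (k : ℂ) * (n : ℂ) / (r : ℂ))) := by
        rw [Finset.sum_comm]
        exact Finset.sum_congr rfl fun e he => by rw [Finset.mul_sum, ← Finset.sum_filter]
    _ = ∑ e ∈ r.divisors, moeConv f e * (if (r / e) ∣ n then ((r / e : ℕ) : ℂ) else 0) := by
        refine Finset.sum_congr rfl fun e he => ?_
        rw [Nat.mem_divisors] at he
        have he0 : e ≠ 0 := by rintro rfl; exact hr0 (Nat.eq_zero_of_zero_dvd he.1)
        have hre : 1 ≤ r / e := Nat.one_le_div_iff (by omega) |>.2 (Nat.le_of_dvd (by omega) he.1)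
        congr 1
        rw [← geom_root_sum (r / e) n hre]
        refine Finset.sum_nbij' (fun k => k / e) (fun j => e * j) ?_ ?_ ?_ ?_ ?_
        · intro k hk
          simp only [Finset.mem_filter, Finset.mem_Icc] at hk
          obtain ⟨⟨hk1, hk2⟩, c, rfl⟩ := hk
          show e * c / e ∈ Finset.Icc 1 (r / e)
          rw [Nat.mul_div_cancel_left _ (by omega)]
          rw [Finset.mem_Icc]
          constructor
          · by_contra h; push_neg at h; interval_cases c; omega
          · exact Nat.le_div_iff_mul_le (by omega) |>.2 (by rw [Nat.mul_comm]; omega)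
        · intro j hj
          rw [Finset.mem_Icc] at hj
          simp only [Finset.mem_filter, Finset.mem_Icc]
          refine ⟨⟨Nat.succ_le_of_lt (Nat.mul_pos (by omega) (by omega)), ?_⟩, Dvd.intro j rfl⟩
          calc e * j ≤ e * (r / e) := Nat.mul_le_mul_left _ hj.2
            _ = r := Nat.mul_div_cancel' he.1
        · intro k hk
          simp only [Finset.mem_filter] at hk
          exact Nat.mul_div_cancel' hk.2
        · intro j hj
          exact Nat.mul_div_cancel_left _ (by omega)
        · intro k hk
          simp only [Finset.mem_filter, Finset.mem_Icc] at hk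
          obtain ⟨⟨hk1, hk2⟩, c, rfl⟩ := hk
          show _ = Complex.exp (-(2 * (Real.pi:ℂ) * Complex.I * ((e * c / e : ℕ):ℂ) * (n:ℂ) / ((r/e : ℕ):ℂ)))
          rw [Nat.mul_div_cancel_left _ (show 0 < e by omega)]
          congr 1
          have hrec : (r : ℂ) = (e : ℂ) * ((r / e : ℕ) : ℂ) := by
            rw [← Nat.cast_mul, Nat.mul_div_cancel' he.1]
          have h1 : ((r / e : ℕ) : ℂ) ≠ 0 := Nat.cast_ne_zero.2 (by omega)
          have h2 : (e : ℂ) ≠ 0 := Nat.cast_ne_zero.2 (by omega)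
          rw [hrec]
          push_cast
          field_simp
    _ = ∑ d ∈ r.divisors, moeConv f (r / d) * (if d ∣ n then (d : ℂ) else 0) := by
        rw [← Nat.sum_div_divisors r (fun d => moeConv f (r/d) * (if d ∣ n then (d:ℂ) else 0))]
        refine Finset.sum_congr rfl fun e he => ?_
        rw [Nat.mem_divisors] at he
        rw [Nat.div_div_self he.1 hr0]

lemma card_filter_dvd (n e : ℕ) (hn : n ≠ 0) (he : e ∣ n) :
    (n.divisors.filter (e ∣ ·)).card = (n / e).divisors.card := by
  have he0 : e ≠ 0 := by rintro rfl; exact hn (Nat.eq_zero_of_zero_dvd he)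
  refine Finset.card_nbij' (fun d => d / e) (fun j => e * j) ?_ ?_ ?_ ?_
  · intro d hd
    simp only [Finset.mem_coe, Finset.mem_filter, Nat.mem_divisors] at hd
    obtain ⟨⟨hd1, -⟩, c, rfl⟩ := hd
    show e * c / e ∈ (n / e).divisors
    rw [Nat.mul_div_cancel_left _ (by omega), Nat.mem_divisors]
    refine ⟨?_, by
      intro h
      apply hn
      rw [← Nat.mul_div_cancel' he, h, Nat.mul_zero]⟩
    have : e * c ∣ e * (n / e) := by rw [Nat.mul_div_cancel' he]; exact hd1
    exact (Nat.mul_dvd_mul_iff_left (show 0 < e by omega)).1 this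
  · intro j hj
    rw [Finset.mem_coe, Nat.mem_divisors] at hj
    simp only [Finset.mem_coe, Finset.mem_filter, Nat.mem_divisors]
    exact ⟨⟨by
      have : e * j ∣ e * (n / e) := Nat.mul_dvd_mul_left e hj.1
      rwa [Nat.mul_div_cancel' he] at this, hn⟩, Dvd.intro j rfl⟩
  · intro d hd
    simp only [Finset.mem_coe, Finset.mem_filter] at hd
    exact Nat.mul_div_cancel' hd.2
  · intro j hj
    exact Nat.mul_div_cancel_left _ (by omega)

/-- If `f` is `r`-even then `Σ_{d|n} f̂(d) = Σ_{d | gcd(n,r)} d·f'(r/d)·τ(n/d)`. -/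
theorem dft_stmt_5 (r : ℕ) (hr : 1 ≤ r) (f : ℕ → ℂ) (hf : IsREven r f) (n : ℕ) (hn : 1 ≤ n) :
    ∑ d ∈ n.divisors, dft r f d =
      ∑ d ∈ (Nat.gcd n r).divisors,
        (d : ℂ) * moeConv f (r / d) * (((n / d).divisors.card : ℕ) : ℂ) := by
  have hn0 : n ≠ 0 := by omega
  have hr0 : r ≠ 0 := by omega
  calc ∑ d ∈ n.divisors, dft r f d
      = ∑ d ∈ n.divisors, ∑ e ∈ r.divisors,
          moeConv f (r / e) * (if e ∣ d then (e : ℂ) else 0) := by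
        exact Finset.sum_congr rfl fun d hd => dft_eq r hr f hf d
    _ = ∑ e ∈ r.divisors, moeConv f (r / e) *
          ∑ d ∈ n.divisors, (if e ∣ d then (e : ℂ) else 0) := by
        rw [Finset.sum_comm]
        exact Finset.sum_congr rfl fun e he => by rw [Finset.mul_sum]
    _ = ∑ e ∈ r.divisors, moeConv f (r / e) *
          ((e : ℂ) * ((n.divisors.filter (e ∣ ·)).card : ℂ)) := by
        refine Finset.sum_congr rfl fun e he => ?_
        congr 1
        rw [← Finset.sum_filter, Finset.sum_const, nsmul_eq_mul, mul_comm]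
    _ = ∑ e ∈ r.divisors, (if e ∣ n then
          (e : ℂ) * moeConv f (r / e) * (((n / e).divisors.card : ℕ) : ℂ) else 0) := by
        refine Finset.sum_congr rfl fun e he => ?_
        by_cases hen : e ∣ n
        · rw [if_pos hen, card_filter_dvd n e hn0 hen]; ring
        · rw [if_neg hen]
          have : n.divisors.filter (e ∣ ·) = ∅ := by
            rw [Finset.filter_eq_empty_iff]
            intro d hd hed
            exact hen (hed.trans (Nat.mem_divisors.1 hd).1)
          rw [this]
          simp
    _ = ∑ d ∈ (Nat.gcd n r).divisors,
        (d : ℂ) * moeConv f (r / d) * (((n / d).divisors.card : ℕ) : ℂ) := by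
        rw [divisors_gcd' n r hr0, Finset.sum_filter]
end

section
/- Let r ∈ ℕ≥1 be even. Then for every n ≥ 1: Σ_{d|r} (−1)^d c_{r/d}(n) = r if n ≡ r/2 (mod r), and Σ_{d|r} (−1)^d c_{r/d}(n) = 0 otherwise. -/
open Finset

/-- Sum of `z^k` for `k ∈ Icc 1 r` where `z = e(m/r)`. -/
lemma sumroots (r : ℕ) (hr : 1 ≤ r) (m : ℕ) :
    ∑ k ∈ Finset.Icc 1 r,
        (Complex.exp (2 * (Real.pi : ℂ) * Complex.I * (m : ℂ) / (r : ℂ))) ^ k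
      = if r ∣ m then (r : ℂ) else 0 := by
  have hr0 : (r : ℂ) ≠ 0 := by
    exact_mod_cast Nat.one_le_iff_ne_zero.mp hr
  set z : ℂ := Complex.exp (2 * (Real.pi : ℂ) * Complex.I * (m : ℂ) / (r : ℂ)) with hz
  have hzr : z ^ r = 1 := by
    rw [hz, ← Complex.exp_nat_mul]
    have : (r : ℂ) * (2 * (Real.pi : ℂ) * Complex.I * (m : ℂ) / (r : ℂ))
        = (m : ℂ) * (2 * (Real.pi : ℂ) * Complex.I) := by field_simp
    rw [this]
    exact_mod_cast Complex.exp_int_mul_two_pi_mul_I (m : ℤ)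
  by_cases hdvd : r ∣ m
  · obtain ⟨t, ht⟩ := hdvd
    have hz1 : z = 1 := by
      rw [hz]
      have : 2 * (Real.pi : ℂ) * Complex.I * (m : ℂ) / (r : ℂ)
          = (t : ℂ) * (2 * (Real.pi : ℂ) * Complex.I) := by
        rw [ht]; push_cast; field_simp
      rw [this]
      exact_mod_cast Complex.exp_int_mul_two_pi_mul_I (t : ℤ)
    rw [if_pos ⟨t, ht⟩, hz1]
    simp [Nat.card_Icc]
  · rw [if_neg hdvd]
    have hzne : z ≠ 1 := by
      intro h
      rw [hz, Complex.exp_eq_one_iff] at h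
      obtain ⟨t, ht⟩ := h
      have h2pi : (2 : ℂ) * (Real.pi : ℂ) * Complex.I ≠ 0 := by
        simp [Complex.I_ne_zero, Real.pi_ne_zero, Complex.ofReal_ne_zero]
      have hm : (m : ℂ) = (t : ℂ) * (r : ℂ) := by
        field_simp at ht
        apply mul_left_cancel₀ h2pi
        linear_combination (2 * (Real.pi : ℂ) * Complex.I) * ht
      have hint : (m : ℤ) = t * r := by exact_mod_cast hm
      exact hdvd (Int.natCast_dvd_natCast.mp ⟨t, by rw [hint]; ring⟩)
    have himg : Finset.Icc 1 r = Finset.image (fun i => i + 1) (Finset.range r) := by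
      ext x
      simp only [Finset.mem_Icc, Finset.mem_image, Finset.mem_range]
      constructor
      · rintro ⟨h1, h2⟩; exact ⟨x - 1, by omega, by omega⟩
      · rintro ⟨i, hi, rfl⟩; omega
    rw [himg, Finset.sum_image (by intro a _ b _ h; have h' : a + 1 = b + 1 := h; omega)]
    have : ∑ i ∈ Finset.range r, z ^ (i + 1) = z * ∑ i ∈ Finset.range r, z ^ i := by
      rw [Finset.mul_sum]; exact Finset.sum_congr rfl fun i _ => by ring
    rw [this, geom_sum_eq hzne, hzr]
    simp


/-- For even `r`: `Σ_{d|r} (−1)^d c_{r/d}(n) = r` if `n ≡ r/2 (mod r)`, else `0`. -/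
theorem dft_stmt_7 (r : ℕ) (hr : 1 ≤ r) (h2 : 2 ∣ r) (n : ℕ) (hn : 1 ≤ n) :
    (∑ d ∈ r.divisors, (-1 : ℂ) ^ d * ram (r / d) n) =
      if n ≡ r / 2 [MOD r] then (r : ℂ) else 0 := by
  have hr0 : r ≠ 0 := Nat.one_le_iff_ne_zero.mp hr
  have hrC : (r : ℂ) ≠ 0 := by exact_mod_cast hr0
  -- Step 1: rewrite each term as a fiber sum
  have step1 : ∀ d ∈ r.divisors,
      (-1 : ℂ) ^ d * ram (r / d) n =
        ∑ k ∈ (Finset.Icc 1 r).filter (fun k => Nat.gcd k r = d),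
          (-1 : ℂ) ^ k * Complex.exp (2 * (Real.pi : ℂ) * Complex.I * (k : ℂ) * (n : ℂ) / (r : ℂ)) := by
    intro d hd
    rw [Nat.mem_divisors] at hd
    obtain ⟨hdvd, _⟩ := hd
    have hd0 : d ≠ 0 := fun h => hr0 (by simpa [h] using hdvd)
    have hq : r / d * d = r := Nat.div_mul_cancel hdvd
    have hq0 : r / d ≠ 0 := fun h => hr0 (by rw [← hq, h, zero_mul])
    rw [ram, Finset.mul_sum]
    refine Finset.sum_bij (fun j _ => j * d) ?_ ?_ ?_ ?_
    · intro j hj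
      simp only [Finset.mem_filter, Finset.mem_Icc] at hj ⊢
      refine ⟨⟨Nat.one_le_iff_ne_zero.mpr (Nat.mul_ne_zero (by omega) hd0), ?_⟩, ?_⟩
      · calc j * d ≤ (r / d) * d := Nat.mul_le_mul_right _ hj.1.2
          _ = r := hq
      · calc Nat.gcd (j * d) r = Nat.gcd (j * d) (r / d * d) := by rw [hq]
          _ = Nat.gcd j (r / d) * d := Nat.gcd_mul_right _ _ _
          _ = d := by rw [hj.2, one_mul]
    · intro a ha b hb h
      exact Nat.eq_of_mul_eq_mul_right (Nat.pos_of_ne_zero hd0) h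
    · intro k hk
      simp only [Finset.mem_filter, Finset.mem_Icc] at hk
      have hdk : d ∣ k := hk.2 ▸ Nat.gcd_dvd_left k r
      refine ⟨k / d, ?_, Nat.div_mul_cancel hdk⟩
      simp only [Finset.mem_filter, Finset.mem_Icc]
      have hkd : k / d * d = k := Nat.div_mul_cancel hdk
      refine ⟨⟨Nat.one_le_iff_ne_zero.mpr (fun h => by rw [h, zero_mul] at hkd; omega),
        Nat.div_le_div_right hk.1.2⟩, ?_⟩
      have hg : Nat.gcd (k / d) (r / d) * d = d := by
        rw [← Nat.gcd_mul_right, hkd, hq, hk.2]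
      have := Nat.eq_of_mul_eq_mul_right (Nat.pos_of_ne_zero hd0) (by rw [hg, one_mul] : Nat.gcd (k / d) (r / d) * d = 1 * d)
      exact this
    · intro j hj
      simp only [Finset.mem_filter, Finset.mem_Icc] at hj
      -- parity: (-1)^d = (-1)^(j*d)
      have hsign : (-1 : ℂ) ^ d = (-1 : ℂ) ^ (j * d) := by
        rcases Nat.even_or_odd d with hde | hdo
        · have hm : Even (j * d) := hde.mul_left j
          rw [hde.neg_one_pow, hm.neg_one_pow]
        · have h2q : 2 ∣ r / d := by
            have hcop : Nat.Coprime 2 d := Nat.coprime_two_left.mpr hdo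
            exact hcop.dvd_of_dvd_mul_right (by rw [hq]; exact h2)
          have hjodd : Odd j := by
            rcases Nat.even_or_odd j with hje | hjo
            · exfalso
              have : 2 ∣ Nat.gcd j (r / d) := Nat.dvd_gcd hje.two_dvd h2q
              rw [hj.2] at this; omega
            · exact hjo
          rw [hdo.neg_one_pow, (hjodd.mul hdo).neg_one_pow]
      rw [← hsign]
      congr 1
      have hqC : ((r / d : ℕ) : ℂ) * (d : ℂ) = (r : ℂ) := by exact_mod_cast congrArg (Nat.cast : ℕ → ℂ) hq
      have hqC0 : ((r / d : ℕ) : ℂ) ≠ 0 := by exact_mod_cast hq0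
      have hdC0 : ((d : ℕ) : ℂ) ≠ 0 := by exact_mod_cast hd0
      congr 1
      push_cast
      rw [div_eq_div_iff hqC0 hrC]
      rw [← hqC]; ring
  rw [Finset.sum_congr rfl step1]
  rw [Finset.sum_fiberwise_of_maps_to (g := fun k => Nat.gcd k r)
    (fun k hk => Nat.mem_divisors.mpr ⟨Nat.gcd_dvd_right k r, hr0⟩)]
  -- Step 2: (-1)^k * e(kn/r) = z^k with m = n + r/2
  have hhalf : (r / 2) * 2 = r := Nat.div_mul_cancel h2
  have hhC : ((r / 2 : ℕ) : ℂ) * 2 = (r : ℂ) := by exact_mod_cast congrArg (Nat.cast : ℕ → ℂ) hhalf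
  have step2 : ∀ k : ℕ,
      (-1 : ℂ) ^ k * Complex.exp (2 * (Real.pi : ℂ) * Complex.I * (k : ℂ) * (n : ℂ) / (r : ℂ))
        = (Complex.exp (2 * (Real.pi : ℂ) * Complex.I * ((n + r / 2 : ℕ) : ℂ) / (r : ℂ))) ^ k := by
    intro k
    rw [← Complex.exp_nat_mul]
    have hsplit : (k : ℂ) * (2 * (Real.pi : ℂ) * Complex.I * ((n + r / 2 : ℕ) : ℂ) / (r : ℂ))
        = 2 * (Real.pi : ℂ) * Complex.I * (k : ℂ) * (n : ℂ) / (r : ℂ)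
          + (k : ℂ) * ((Real.pi : ℂ) * Complex.I) := by
      push_cast
      field_simp
      linear_combination (k : ℂ) * hhC
    rw [hsplit, Complex.exp_add, Complex.exp_nat_mul, Complex.exp_pi_mul_I]
    ring
  rw [Finset.sum_congr rfl (fun k _ => step2 k)]
  rw [sumroots r hr (n + r / 2)]
  -- Step 3: condition equivalence
  have hcond : (n ≡ r / 2 [MOD r]) ↔ r ∣ (n + r / 2) := by
    rw [Nat.modEq_iff_dvd]
    have hZ : ((r / 2 : ℕ) : ℤ) * 2 = (r : ℤ) := by exact_mod_cast congrArg (Nat.cast : ℕ → ℤ) hhalf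
    constructor
    · intro ⟨t, ht⟩
      refine Int.natCast_dvd_natCast.mp ⟨1 - t, ?_⟩
      push_cast
      push_cast at ht
      linarith [ht, hZ]
    · intro hdvd
      obtain ⟨t, ht⟩ := Int.natCast_dvd_natCast.mpr hdvd
      refine ⟨1 - t, ?_⟩
      push_cast at ht ⊢
      linarith [ht, hZ]
  by_cases hc : n ≡ r / 2 [MOD r]
  · rw [if_pos hc, if_pos (hcond.mp hc)]
  · rw [if_neg hc, if_neg (fun h => hc (hcond.mpr h))]
end

section
/- Let r, k ≥ 1 and let N_r(n,k) denote the number of residue classes (x_1, …, x_k) modulo r with gcd(x_1, r) = … = gcd(x_k, r) = 1 and x_1 + … + x_k ≡ n (mod r). Then for every n ≥ 1, N_r(n,k) = (1/r) Σ_{d|r} (c_r(r/d))^k · c_d(n). -/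
open Finset

/-- exp to stdAddChar bridge -/
lemma exp_eq_std (r : ℕ) [NeZero r] (a b : ℕ) :
    Complex.exp (2 * (Real.pi : ℂ) * Complex.I * (a : ℂ) * (b : ℂ) / (r : ℂ)) =
      ZMod.stdAddChar ((a : ZMod r) * (b : ZMod r)) := by
  have h : ((a : ZMod r) * (b : ZMod r)) = (((a * b : ℕ) : ℤ) : ZMod r) := by push_cast; ring
  rw [h, ZMod.stdAddChar_coe]
  push_cast
  ring_nf

/-- transport sums over coprime residues in `Icc 1 r` to sums over units of `ZMod r` -/
lemma sum_Icc_filter_units (r : ℕ) [NeZero r] (f : ZMod r → ℂ) :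
    ∑ m ∈ (Icc 1 r).filter (fun m => Nat.gcd m r = 1), f (m : ZMod r)
      = ∑ u : (ZMod r)ˣ, f (u : ZMod r) := by
  have hr : 0 < r := Nat.pos_of_ne_zero (NeZero.ne r)
  refine Finset.sum_bij' (fun m hm => ZMod.unitOfCoprime m (mem_filter.mp hm).2)
    (fun u _ => if (u : ZMod r).val = 0 then r else (u : ZMod r).val) ?_ ?_ ?_ ?_ ?_
  · intro a ha; exact mem_univ _
  · intro u _
    by_cases h : (u : ZMod r).val = 0
    · simp only [h, if_true]
      have h0 : ((u : ZMod r)) = 0 := by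
        rwa [ZMod.val_eq_zero] at h
      have h01 : (0 : ZMod r) = 1 := isUnit_zero_iff.mp (h0 ▸ u.isUnit)
      have hr1 : r = 1 := ZMod.subsingleton_iff.mp (subsingleton_of_zero_eq_one h01)
      simp [hr1]
    · simp only [h, if_false, mem_filter, mem_Icc]
      refine ⟨⟨Nat.one_le_iff_ne_zero.mpr h, le_of_lt (ZMod.val_lt _)⟩, ZMod.val_coe_unit_coprime u⟩
  · intro m hm
    obtain ⟨hm1, hm2⟩ := mem_filter.mp hm
    obtain ⟨h1, h2⟩ := mem_Icc.mp hm1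
    simp only [ZMod.coe_unitOfCoprime]
    rcases eq_or_lt_of_le h2 with h | h
    · subst h
      simp [ZMod.natCast_self]
    · simp only [ZMod.val_natCast_of_lt h]
      simp [Nat.one_le_iff_ne_zero.mp h1]
  · intro u _
    ext
    simp only [ZMod.coe_unitOfCoprime]
    by_cases h : (u : ZMod r).val = 0
    · simp only [h, if_true]
      have h0 : ((u : ZMod r)) = 0 := by rwa [ZMod.val_eq_zero] at h
      rw [ZMod.natCast_self, h0]
    · simp only [h, if_false]
      exact ZMod.natCast_zmod_val _
  · intro m hm
    rw [ZMod.coe_unitOfCoprime]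

/-- transport sums over `Icc 1 r` to sums over `ZMod r` -/
lemma sum_Icc_cast (r : ℕ) [NeZero r] (f : ZMod r → ℂ) :
    ∑ m ∈ Icc 1 r, f (m : ZMod r) = ∑ z : ZMod r, f z := by
  have hr : 0 < r := Nat.pos_of_ne_zero (NeZero.ne r)
  refine Finset.sum_bij' (fun m _ => (m : ZMod r))
    (fun z _ => if z.val = 0 then r else z.val) (fun _ _ => mem_univ _) ?_ ?_ ?_ ?_
  · intro z _
    by_cases h : z.val = 0
    · simp only [h, if_true, mem_Icc]; omega
    · simp only [h, if_false, mem_Icc]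
      exact ⟨Nat.one_le_iff_ne_zero.mpr h, le_of_lt (ZMod.val_lt _)⟩
  · intro m hm
    obtain ⟨h1, h2⟩ := mem_Icc.mp hm
    rcases eq_or_lt_of_le h2 with h | h
    · subst h; simp [ZMod.natCast_self]
    · simp only [ZMod.val_natCast_of_lt h]
      simp [Nat.one_le_iff_ne_zero.mp h1]
  · intro z _
    by_cases h : z.val = 0
    · simp only [h, if_true]
      rw [ZMod.natCast_self, (ZMod.val_eq_zero z).mp h]
    · simp only [h, if_false]
      exact ZMod.natCast_zmod_val _
  · intro m _; rfl

lemma ram_eq_s9 (r : ℕ) [NeZero r] (m : ℕ) :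
    ram r m = ∑ u : (ZMod r)ˣ, ZMod.stdAddChar ((m : ZMod r) * (u : ZMod r)) := by
  rw [ram, ← sum_Icc_filter_units r (fun z => ZMod.stdAddChar ((m : ZMod r) * z))]
  refine Finset.sum_congr rfl fun t ht => ?_
  rw [exp_eq_std r t m, mul_comm]

lemma ram_eq_neg (r : ℕ) [NeZero r] (m : ℕ) :
    ram r m = ∑ u : (ZMod r)ˣ, ZMod.stdAddChar (-((m : ZMod r) * (u : ZMod r))) := by
  rw [ram_eq_s9]
  refine Fintype.sum_equiv (Equiv.mulLeft (-1 : (ZMod r)ˣ))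
    (fun u => ZMod.stdAddChar ((m : ZMod r) * (u : ZMod r))) _ fun u => ?_
  simp only [Equiv.coe_mulLeft]
  congr 1
  push_cast
  ring

lemma addchar_sum {ι : Type*} (r : ℕ) (ψ : AddChar (ZMod r) ℂ) (s : Finset ι) (f : ι → ZMod r) :
    ψ (∑ i ∈ s, f i) = ∏ i ∈ s, ψ (f i) := by
  classical
  induction s using Finset.cons_induction with
  | empty => simp
  | cons a s ha ih => rw [Finset.sum_cons, Finset.prod_cons, AddChar.map_add_eq_mul, ih]

lemma ram_lift (r d : ℕ) [NeZero r] (hd : d ∣ r) (a : ℕ) (ha : Nat.Coprime a d) :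
    ram r (r / d * a) = ram r (r / d) := by
  haveI : NeZero d := ⟨fun h => NeZero.ne r (Nat.eq_zero_of_zero_dvd (h ▸ hd))⟩
  obtain ⟨u0, hu0⟩ := ZMod.unitsMap_surjective hd (ZMod.unitOfCoprime a ha)
  set A := (u0 : ZMod r).val with hA
  have hA2 : (A : ZMod d) = (a : ZMod d) := by
    have := congrArg (fun u : (ZMod d)ˣ => (u : ZMod d)) hu0
    simp only [ZMod.unitsMap_def, Units.coe_map, MonoidHom.coe_coe,
      ZMod.coe_unitOfCoprime] at this
    rw [hA, ZMod.natCast_val, ← ZMod.castHom_apply (h := hd)]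
    exact this
  have hmod : (A : ℕ) ≡ a [MOD d] := (ZMod.natCast_eq_natCast_iff _ _ _).mp hA2
  have hgd : r / d * d = r := Nat.div_mul_cancel hd
  have key : ((r / d * a : ℕ) : ZMod r) = ((r / d * A : ℕ) : ZMod r) := by
    rw [ZMod.natCast_eq_natCast_iff]
    exact (hgd ▸ (hmod.mul_left' (c := r / d))).symm
  rw [ram_eq_s9, ram_eq_s9, key]
  have hcoe : ((r / d * A : ℕ) : ZMod r) = ((r / d : ℕ) : ZMod r) * (u0 : ZMod r) := by
    push_cast
    rw [hA, ZMod.natCast_val, ZMod.cast_id]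
  rw [hcoe]
  exact (Fintype.sum_equiv (Equiv.mulLeft u0⁻¹)
    (fun u => ZMod.stdAddChar (((r / d : ℕ) : ZMod r) * (u : ZMod r)))
    (fun u => ZMod.stdAddChar (((r / d : ℕ) : ZMod r) * (u0 : ZMod r) * (u : ZMod r)))
    (fun u => by
      simp only [Equiv.coe_mulLeft]
      congr 1
      rw [mul_assoc, ← Units.val_mul, mul_inv_cancel_left])).symm

lemma ram_inner_sum (r d : ℕ) [NeZero r] (hd : d ∣ r) (n : ℕ) :
    ∑ a ∈ (Icc 1 d).filter (fun a => Nat.gcd a d = 1),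
      ZMod.stdAddChar (N := r) (-(((r / d * a : ℕ) : ZMod r) * (n : ZMod r))) = ram d n := by
  haveI : NeZero d := ⟨fun h => NeZero.ne r (Nat.eq_zero_of_zero_dvd (h ▸ hd))⟩
  have hd0 : (d : ℂ) ≠ 0 := Nat.cast_ne_zero.mpr (NeZero.ne d)
  have hr0 : (r : ℂ) ≠ 0 := Nat.cast_ne_zero.mpr (NeZero.ne r)
  obtain ⟨g, hg⟩ : ∃ g, r / d = g := ⟨_, rfl⟩
  have hgd : g * d = r := by rw [← hg]; exact Nat.div_mul_cancel hd
  rw [hg]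
  rw [ram_eq_neg, ← sum_Icc_filter_units d (fun z => ZMod.stdAddChar (-((n : ZMod d) * z)))]
  refine Finset.sum_congr rfl fun a _ => ?_
  have h1 : (-(((g * a : ℕ) : ZMod r) * (n : ZMod r))) =
      (((-((g * a * n : ℕ) : ℤ) : ℤ)) : ZMod r) := by push_cast; ring
  have h2 : (-((n : ZMod d) * (a : ZMod d))) = (((-((a * n : ℕ) : ℤ) : ℤ)) : ZMod d) := by
    push_cast; ring
  rw [h1, h2, ZMod.stdAddChar_coe, ZMod.stdAddChar_coe]
  congr 1
  push_cast
  rw [div_eq_div_iff hr0 hd0]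
  have hrc : ((r : ℂ)) = (g : ℂ) * d := by rw [← hgd]; push_cast; ring
  rw [hrc]
  ring

lemma sum_Icc_divisors (r : ℕ) (hr : 0 < r) (F : ℕ → ℂ) :
    ∑ m ∈ Icc 1 r, F m =
      ∑ d ∈ r.divisors, ∑ a ∈ (Icc 1 d).filter (fun a => Nat.gcd a d = 1), F (r / d * a) := by
  rw [← Finset.sum_sigma (r.divisors)
      (fun d => (Icc 1 d).filter (fun a => Nat.gcd a d = 1))
      (fun p => F (r / p.1 * p.2))]
  refine Finset.sum_bij' (fun m hm => (⟨r / Nat.gcd m r, m / Nat.gcd m r⟩ : Σ _ : ℕ, ℕ))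
    (fun p _ => r / p.1 * p.2) ?_ ?_ ?_ ?_ ?_
  · intro m hm
    obtain ⟨h1, h2⟩ := mem_Icc.mp hm
    have hm0 : 0 < m := h1
    have hg : 0 < Nat.gcd m r := Nat.gcd_pos_of_pos_left r hm0
    have hgr : Nat.gcd m r ∣ r := Nat.gcd_dvd_right m r
    have hgm : Nat.gcd m r ∣ m := Nat.gcd_dvd_left m r
    simp only [Finset.mem_sigma, Nat.mem_divisors, mem_filter, mem_Icc]
    refine ⟨⟨Nat.div_dvd_of_dvd hgr, hr.ne'⟩, ⟨Nat.one_le_div_iff hg |>.mpr (Nat.le_of_dvd hm0 hgm), Nat.div_le_div_right h2⟩, ?_⟩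
    exact Nat.coprime_div_gcd_div_gcd hg
  · intro p hp
    simp only [Finset.mem_sigma, Nat.mem_divisors, mem_filter, mem_Icc] at hp
    obtain ⟨⟨hd, _⟩, ⟨ha1, ha2⟩, _⟩ := hp
    have hd0 : 0 < p.1 := Nat.pos_of_dvd_of_pos hd hr
    have hrd : 0 < r / p.1 := Nat.div_pos (Nat.le_of_dvd hr hd) hd0
    rw [mem_Icc]
    constructor
    · exact Nat.one_le_iff_ne_zero.mpr (Nat.mul_ne_zero hrd.ne' (by omega))
    · calc r / p.1 * p.2 ≤ r / p.1 * p.1 := Nat.mul_le_mul_left _ ha2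
        _ = r := Nat.div_mul_cancel hd
  · intro m hm
    obtain ⟨h1, h2⟩ := mem_Icc.mp hm
    have hg : 0 < Nat.gcd m r := Nat.gcd_pos_of_pos_left r h1
    have hgr : Nat.gcd m r ∣ r := Nat.gcd_dvd_right m r
    have hgm : Nat.gcd m r ∣ m := Nat.gcd_dvd_left m r
    simp only []
    rw [Nat.div_div_self hgr hr.ne', Nat.mul_div_cancel' hgm]
  · intro p hp
    simp only [Finset.mem_sigma, Nat.mem_divisors, mem_filter, mem_Icc] at hp
    obtain ⟨⟨hd, _⟩, ⟨ha1, ha2⟩, hcop⟩ := hp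
    have hd0 : 0 < p.1 := Nat.pos_of_dvd_of_pos hd hr
    have hrd : 0 < r / p.1 := Nat.div_pos (Nat.le_of_dvd hr hd) hd0
    have hkey : Nat.gcd (r / p.1 * p.2) r = r / p.1 := by
      have h2' : Nat.gcd (r / p.1 * p.2) (r / p.1 * p.1) = r / p.1 := by
        rw [Nat.gcd_mul_left, hcop, mul_one]
      rwa [Nat.div_mul_cancel hd] at h2'
    ext
    · simp only [hkey]
      exact Nat.div_div_self hd hr.ne'
    · simp only [hkey]
      simp only [Nat.mul_div_cancel_left _ hrd]
      exact HEq.rfl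
  · intro m hm
    obtain ⟨h1, h2⟩ := mem_Icc.mp hm
    have hg : 0 < Nat.gcd m r := Nat.gcd_pos_of_pos_left r h1
    have hgr : Nat.gcd m r ∣ r := Nat.gcd_dvd_right m r
    have hgm : Nat.gcd m r ∣ m := Nat.gcd_dvd_left m r
    simp only []
    rw [Nat.div_div_self hgr hr.ne', Nat.mul_div_cancel' hgm]


set_option maxHeartbeats 1000000 in
lemma count_transform (r k n : ℕ) [NeZero r] (T : Finset ℕ) :
    (((Fintype.piFinset (fun _ : Fin k => T)).filter
        (fun x => (∑ i, x i) % r = n % r)).card : ℂ) * r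
      = ∑ m : ZMod r, (∑ t ∈ T, ZMod.stdAddChar (m * (t : ZMod r))) ^ k
          * ZMod.stdAddChar (-(m * (n : ZMod r))) := by
  calc (((Fintype.piFinset (fun _ : Fin k => T)).filter
        (fun x => (∑ i, x i) % r = n % r)).card : ℂ) * r
      = ∑ x ∈ Fintype.piFinset (fun _ : Fin k => T),
          (if (∑ i, x i) % r = n % r then (r : ℂ) else 0) := by
        rw [← Finset.sum_filter, Finset.sum_const, nsmul_eq_mul]
    _ = ∑ x ∈ Fintype.piFinset (fun _ : Fin k => T),
          ∑ m : ZMod r, ZMod.stdAddChar (m * (((∑ i, x i : ℕ) : ZMod r) - (n : ZMod r))) := by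
        refine Finset.sum_congr rfl fun x _ => ?_
        have hiff : ((((∑ i, x i : ℕ) : ZMod r) - (n : ZMod r)) = 0)
            ↔ ((∑ i, x i) % r = n % r) := by
          rw [sub_eq_zero, ZMod.natCast_eq_natCast_iff]
          exact Iff.rfl
        rw [AddChar.sum_mulShift _ (ZMod.isPrimitive_stdAddChar r), ZMod.card,
          if_congr hiff rfl rfl]
        split_ifs <;> simp
    _ = ∑ m : ZMod r, (∑ x ∈ Fintype.piFinset (fun _ : Fin k => T),
          ZMod.stdAddChar (m * ((∑ i, x i : ℕ) : ZMod r))) * ZMod.stdAddChar (-(m * (n : ZMod r))) := by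
        rw [Finset.sum_comm]
        refine Finset.sum_congr rfl fun m _ => ?_
        rw [Finset.sum_mul]
        refine Finset.sum_congr rfl fun x _ => ?_
        rw [← AddChar.map_add_eq_mul]
        congr 1
        ring
    _ = ∑ m : ZMod r, (∑ t ∈ T, ZMod.stdAddChar (m * (t : ZMod r))) ^ k
          * ZMod.stdAddChar (-(m * (n : ZMod r))) := by
        refine Finset.sum_congr rfl fun m _ => ?_
        have hpow : ∑ x ∈ Fintype.piFinset (fun _ : Fin k => T),
              ZMod.stdAddChar (m * ((∑ i, x i : ℕ) : ZMod r))
            = (∑ t ∈ T, ZMod.stdAddChar (m * (t : ZMod r))) ^ k := by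
          calc ∑ x ∈ Fintype.piFinset (fun _ : Fin k => T),
                ZMod.stdAddChar (m * ((∑ i, x i : ℕ) : ZMod r))
              = ∑ x ∈ Fintype.piFinset (fun _ : Fin k => T),
                  ∏ i, ZMod.stdAddChar (m * ((x i : ℕ) : ZMod r)) := by
                refine Finset.sum_congr rfl fun x _ => ?_
                rw [show (m * ((∑ i, x i : ℕ) : ZMod r)) = ∑ i, m * ((x i : ℕ) : ZMod r) by
                  push_cast; rw [Finset.mul_sum], addchar_sum]
            _ = ∏ _i : Fin k, ∑ t ∈ T, ZMod.stdAddChar (m * (t : ZMod r)) :=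
                (Finset.prod_univ_sum (fun _ : Fin k => T)
                  (fun _ t => ZMod.stdAddChar ((m : ZMod r) * (t : ZMod r)))).symm
            _ = (∑ t ∈ T, ZMod.stdAddChar (m * (t : ZMod r))) ^ k := by
                rw [Finset.prod_const, Finset.card_univ, Fintype.card_fin]
        rw [hpow]

set_option maxHeartbeats 1000000 in
/-- `N_r(n,k)`, the number of solutions (mod `r`) of `x_1 + ⋯ + x_k ≡ n (mod r)` with all
`gcd(x_i, r) = 1`, equals `(1/r) Σ_{d|r} (c_r(r/d))^k c_d(n)`. -/
theorem dft_stmt_9 (r k : ℕ) (hr : 1 ≤ r) (hk : 1 ≤ k) (n : ℕ) (hn : 1 ≤ n) :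
    ((((Fintype.piFinset (fun _ : Fin k => Finset.Icc 1 r)).filter
        (fun x => (∀ i, Nat.gcd (x i) r = 1) ∧ (∑ i, x i) % r = n % r)).card : ℕ) : ℂ) =
      (1 / (r : ℂ)) * ∑ d ∈ r.divisors, (ram r (r / d)) ^ k * ram d n := by
  haveI : NeZero r := ⟨by omega⟩
  have hr0 : (r : ℂ) ≠ 0 := Nat.cast_ne_zero.mpr (NeZero.ne r)
  have hA : ((Fintype.piFinset (fun _ : Fin k => Finset.Icc 1 r)).filter
        (fun x => (∀ i, Nat.gcd (x i) r = 1) ∧ (∑ i, x i) % r = n % r))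
      = (Fintype.piFinset (fun _ : Fin k => (Icc 1 r).filter (fun m => Nat.gcd m r = 1))).filter
        (fun x => (∑ i, x i) % r = n % r) := by
    ext x
    simp only [mem_filter, Fintype.mem_piFinset, forall_and]
    tauto
  rw [hA]
  have hS : ∀ m : ℕ, (∑ t ∈ (Icc 1 r).filter (fun m => Nat.gcd m r = 1),
      ZMod.stdAddChar ((m : ZMod r) * (t : ZMod r))) = ram r m := by
    intro m
    rw [ram_eq_s9, sum_Icc_filter_units r (fun z => ZMod.stdAddChar ((m : ZMod r) * z))]
  have key : (((((Fintype.piFinset (fun _ : Fin k =>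
        (Icc 1 r).filter (fun m => Nat.gcd m r = 1))).filter
        (fun x => (∑ i, x i) % r = n % r)).card : ℕ)) : ℂ) * r
      = ∑ d ∈ r.divisors, (ram r (r / d)) ^ k * ram d n := by
    rw [count_transform r k n ((Icc 1 r).filter (fun m => Nat.gcd m r = 1))]
    calc ∑ m : ZMod r, (∑ t ∈ (Icc 1 r).filter (fun m => Nat.gcd m r = 1),
            ZMod.stdAddChar (m * (t : ZMod r))) ^ k * ZMod.stdAddChar (-(m * (n : ZMod r)))
        = ∑ m ∈ Icc 1 r, (∑ t ∈ (Icc 1 r).filter (fun m => Nat.gcd m r = 1),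
            ZMod.stdAddChar ((m : ZMod r) * (t : ZMod r))) ^ k
            * ZMod.stdAddChar (-((m : ZMod r) * (n : ZMod r))) :=
          (sum_Icc_cast r (fun z => (∑ t ∈ (Icc 1 r).filter (fun m => Nat.gcd m r = 1),
            ZMod.stdAddChar (z * (t : ZMod r))) ^ k
            * ZMod.stdAddChar (-(z * (n : ZMod r))))).symm
      _ = ∑ d ∈ r.divisors, ∑ a ∈ (Icc 1 d).filter (fun a => Nat.gcd a d = 1),
            (∑ t ∈ (Icc 1 r).filter (fun m => Nat.gcd m r = 1),
              ZMod.stdAddChar (((r / d * a : ℕ) : ZMod r) * (t : ZMod r))) ^ k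
            * ZMod.stdAddChar (-(((r / d * a : ℕ) : ZMod r) * (n : ZMod r))) :=
          sum_Icc_divisors r (by omega) _
      _ = ∑ d ∈ r.divisors, (ram r (r / d)) ^ k * ram d n := by
          refine Finset.sum_congr rfl fun d hd => ?_
          have hdvd : d ∣ r := (Nat.mem_divisors.mp hd).1
          have hstep : ∀ a ∈ (Icc 1 d).filter (fun a => Nat.gcd a d = 1),
              (∑ t ∈ (Icc 1 r).filter (fun m => Nat.gcd m r = 1),
                ZMod.stdAddChar (((r / d * a : ℕ) : ZMod r) * (t : ZMod r))) ^ k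
                * ZMod.stdAddChar (-(((r / d * a : ℕ) : ZMod r) * (n : ZMod r)))
              = (ram r (r / d)) ^ k
                * ZMod.stdAddChar (-(((r / d * a : ℕ) : ZMod r) * (n : ZMod r))) := by
            intro a ha
            have hcop : Nat.Coprime a d := (mem_filter.mp ha).2
            rw [hS, ram_lift r d hdvd a hcop]
          rw [Finset.sum_congr rfl hstep, ← Finset.mul_sum, ram_inner_sum r d hdvd n]
  rw [one_div, inv_mul_eq_div, eq_div_iff hr0]
  exact key
end

section
/- Let r ≥ 1 and let f and g be r-even arithmetic functions such that f(n) = Σ_{d|r} g(d) c_d(n) for all n ≥ 1. Then for every n ≥ 1, writing m = r/gcd(n,r), one has g(m) = (1/r) Σ_{d|r} f(r/d) c_d(n). -/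
open Finset

/-- Geometric sum of roots of unity over `Icc 1 r`. -/
lemma sum_exp_eq (r : ℕ) (hr : 1 ≤ r) (a : ℕ) :
    ∑ j ∈ Finset.Icc 1 r,
        Complex.exp (2 * (Real.pi : ℂ) * Complex.I * (j : ℂ) * (a : ℂ) / (r : ℂ)) =
      if r ∣ a then (r : ℂ) else 0 := by
  have hr0 : (r : ℂ) ≠ 0 := by
    exact Nat.cast_ne_zero.mpr (by omega)
  set ζ : ℂ := Complex.exp (2 * (Real.pi : ℂ) * Complex.I * (a : ℂ) / (r : ℂ)) with hζ
  have hpow : ∀ j : ℕ,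
      Complex.exp (2 * (Real.pi : ℂ) * Complex.I * (j : ℂ) * (a : ℂ) / (r : ℂ)) = ζ ^ j := by
    intro j
    rw [hζ, ← Complex.exp_nat_mul]
    congr 1
    ring
  simp only [hpow]
  by_cases hd : r ∣ a
  · rw [if_pos hd]
    obtain ⟨t, ht⟩ := hd
    have hζ1 : ζ = 1 := by
      rw [hζ, ht]
      have harg : 2 * (Real.pi : ℂ) * Complex.I * ((r * t : ℕ) : ℂ) / (r : ℂ)
          = ((t : ℤ) : ℂ) * (2 * (Real.pi : ℂ) * Complex.I) := by
        push_cast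
        field_simp
      rw [harg, Complex.exp_int_mul_two_pi_mul_I]
    simp [hζ1, Nat.card_Icc]
  · have hζr : ζ ^ r = 1 := by
      rw [hζ, ← Complex.exp_nat_mul]
      have harg : (r : ℂ) * (2 * (Real.pi : ℂ) * Complex.I * (a : ℂ) / (r : ℂ))
          = ((a : ℤ) : ℂ) * (2 * (Real.pi : ℂ) * Complex.I) := by
        push_cast
        field_simp
      rw [harg, Complex.exp_int_mul_two_pi_mul_I]
    have hζ1 : ζ ≠ 1 := by
      intro hone
      rw [hζ, Complex.exp_eq_one_iff] at hone
      obtain ⟨k, hk⟩ := hone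
      have h2pi : (2 : ℂ) * (Real.pi : ℂ) * Complex.I ≠ 0 := by
        simp [Real.pi_ne_zero, Complex.I_ne_zero]
      have hac : (a : ℂ) = (k : ℂ) * (r : ℂ) := by
        field_simp at hk
        have := hk
        -- hk : 2 * π * I * a = k * (2 * π * I) * r  (roughly)
        apply mul_left_cancel₀ h2pi
        linear_combination (2 * (Real.pi : ℂ) * Complex.I) * hk
      have haz : (a : ℤ) = k * (r : ℤ) := by exact_mod_cast hac
      exact hd (Int.natCast_dvd_natCast.mp ⟨k, by linarith⟩)
    have hIcc : ∑ j ∈ Finset.Icc 1 r, ζ ^ j = ∑ j ∈ Finset.range r, ζ ^ (1 + j) := by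
      rw [← Finset.Ico_add_one_right_eq_Icc, Finset.sum_Ico_eq_sum_range]
      simp
    rw [if_neg hd, hIcc]
    have : ∑ j ∈ Finset.range r, ζ ^ (1 + j) = ζ * ∑ j ∈ Finset.range r, ζ ^ j := by
      rw [Finset.mul_sum]
      exact Finset.sum_congr rfl fun j _ => by rw [pow_add, pow_one]
    rw [this, geom_sum_eq hζ1, hζr]
    simp

/-- Cohen's inversion formula: if `f, g` are `r`-even and `f(n) = Σ_{d|r} g(d) c_d(n)`, then
`g(r/gcd(n,r)) = (1/r) Σ_{d|r} f(r/d) c_d(n)`. -/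
theorem dft_stmt_10 (r : ℕ) (hr : 1 ≤ r) (f g : ℕ → ℂ) (hf : IsREven r f) (hg : IsREven r g)
    (h : ∀ n : ℕ, 1 ≤ n → f n = ∑ d ∈ r.divisors, g d * ram d n) (n : ℕ) (hn : 1 ≤ n) :
    g (r / Nat.gcd n r) = (1 / (r : ℂ)) * ∑ d ∈ r.divisors, f (r / d) * ram d n := by
  have hrpos : 0 < r := hr
  have hrne : r ≠ 0 := hrpos.ne'
  have hr0 : (r : ℂ) ≠ 0 := by exact_mod_cast hrne
  set g0 := Nat.gcd n r with hg0def
  have hg0pos : 0 < g0 := Nat.gcd_pos_of_pos_right n hrpos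
  have hg0r : g0 ∣ r := Nat.gcd_dvd_right n r
  have hg0n : g0 ∣ n := Nat.gcd_dvd_left n r
  set e0 := r / g0 with he0def
  set n' := n / g0 with hn'def
  have he0pos : 0 < e0 := Nat.div_pos (Nat.le_of_dvd hrpos hg0r) hg0pos
  have hre : g0 * e0 = r := Nat.mul_div_cancel' hg0r
  have hnn' : g0 * n' = n := Nat.mul_div_cancel' hg0n
  have hn'e0 : Nat.Coprime n' e0 := Nat.coprime_div_gcd_div_gcd hg0pos
  -- Step A : regroup the sum over divisors into a full sum over Icc 1 r
  have stepA : ∑ d ∈ r.divisors, f (r / d) * ram d n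
      = ∑ j ∈ Finset.Icc 1 r,
          f j * Complex.exp (2 * (Real.pi : ℂ) * Complex.I * (j : ℂ) * (n : ℂ) / (r : ℂ)) := by
    unfold ram
    simp_rw [Finset.mul_sum]
    rw [Finset.sum_sigma']
    refine Finset.sum_nbij' (fun p => p.2 * (r / p.1))
      (fun j => ⟨r / Nat.gcd j r, j / Nat.gcd j r⟩) ?_ ?_ ?_ ?_ ?_
    · rintro ⟨d, k⟩ hp
      simp only [Finset.mem_sigma, Nat.mem_divisors, Finset.mem_filter, Finset.mem_Icc] at hp
      obtain ⟨⟨hdr, -⟩, ⟨hk1, hkd⟩, hkcop⟩ := hp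
      have hdpos : 0 < d := Nat.pos_of_dvd_of_pos hdr hrpos
      have hcpos : 0 < r / d := Nat.div_pos (Nat.le_of_dvd hrpos hdr) hdpos
      simp only [Finset.mem_Icc]
      constructor
      · exact Nat.mul_pos hk1 hcpos
      · calc k * (r / d) ≤ d * (r / d) := Nat.mul_le_mul_right _ hkd
          _ = r := Nat.mul_div_cancel' hdr
    · intro j hj
      simp only [Finset.mem_Icc] at hj
      have hjpos : 0 < j := hj.1
      have hgj : Nat.gcd j r ∣ j := Nat.gcd_dvd_left j r
      have hgr : Nat.gcd j r ∣ r := Nat.gcd_dvd_right j r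
      have hgpos : 0 < Nat.gcd j r := Nat.gcd_pos_of_pos_left r hjpos
      simp only [Finset.mem_sigma, Nat.mem_divisors, Finset.mem_filter, Finset.mem_Icc]
      refine ⟨⟨Nat.div_dvd_of_dvd hgr, hrne⟩, ⟨?_, ?_⟩, ?_⟩
      · exact Nat.div_pos (Nat.le_of_dvd hjpos hgj) hgpos
      · exact Nat.div_le_div_right hj.2
      · exact Nat.coprime_div_gcd_div_gcd hgpos
    · rintro ⟨d, k⟩ hp
      simp only [Finset.mem_sigma, Nat.mem_divisors, Finset.mem_filter, Finset.mem_Icc] at hp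
      obtain ⟨⟨hdr, -⟩, ⟨hk1, hkd⟩, hkcop⟩ := hp
      have hdpos : 0 < d := Nat.pos_of_dvd_of_pos hdr hrpos
      have hcpos : 0 < r / d := Nat.div_pos (Nat.le_of_dvd hrpos hdr) hdpos
      have hgcd : Nat.gcd (k * (r / d)) r = r / d := by
        have : Nat.gcd (k * (r / d)) (d * (r / d)) = r / d := by
          rw [Nat.gcd_mul_right, hkcop, one_mul]
        rwa [Nat.mul_div_cancel' hdr] at this
      have h1 : r / (r / d) = d := Nat.div_div_self hdr hrne
      simp only [hgcd, h1, Nat.mul_div_cancel _ hcpos]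
    · intro j hj
      simp only [Finset.mem_Icc] at hj
      have hjpos : 0 < j := hj.1
      have hgj : Nat.gcd j r ∣ j := Nat.gcd_dvd_left j r
      have hgr : Nat.gcd j r ∣ r := Nat.gcd_dvd_right j r
      simp only
      rw [Nat.div_div_self hgr hrne, Nat.div_mul_cancel hgj]
    · rintro ⟨d, k⟩ hp
      simp only [Finset.mem_sigma, Nat.mem_divisors, Finset.mem_filter, Finset.mem_Icc] at hp
      obtain ⟨⟨hdr, -⟩, ⟨hk1, hkd⟩, hkcop⟩ := hp
      have hdpos : 0 < d := Nat.pos_of_dvd_of_pos hdr hrpos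
      have hd0 : (d : ℂ) ≠ 0 := by exact_mod_cast hdpos.ne'
      have hcpos : 0 < r / d := Nat.div_pos (Nat.le_of_dvd hrpos hdr) hdpos
      have hgcd : Nat.gcd (k * (r / d)) r = r / d := by
        have : Nat.gcd (k * (r / d)) (d * (r / d)) = r / d := by
          rw [Nat.gcd_mul_right, hkcop, one_mul]
        rwa [Nat.mul_div_cancel' hdr] at this
      have hjpos : 1 ≤ k * (r / d) := Nat.mul_pos hk1 hcpos
      simp only
      have hfval : f (r / d) = f (k * (r / d)) := by
        have := hf (k * (r / d)) hjpos
        rwa [hgcd] at this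
      rw [hfval]
      congr 2
      have key : ((r / d : ℕ) : ℂ) * (d : ℂ) = (r : ℂ) := by
        exact_mod_cast congrArg (Nat.cast : ℕ → ℂ) (Nat.div_mul_cancel hdr)
      push_cast
      rw [div_eq_div_iff hd0 hr0]
      linear_combination (-(2 * (Real.pi : ℂ) * Complex.I * (k : ℂ) * (n : ℂ))) * key
  -- Uniqueness data for the surviving index
  -- Step B : evaluate the full sum
  have condA : ∀ e ∈ r.divisors, ∀ m : ℕ, 1 ≤ m → m ≤ e → Nat.gcd m e = 1 →
      r ∣ m * (r / e) + n → e = e0 := by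
    intro e he m hm1 hme hcop hdvd
    simp only [Nat.mem_divisors] at he
    obtain ⟨her, -⟩ := he
    set c := r / e with hcdef
    have hec : e * c = r := Nat.mul_div_cancel' her
    have hcpos : 0 < c := Nat.div_pos (Nat.le_of_dvd hrpos her) (Nat.pos_of_dvd_of_pos her hrpos)
    have h1 : Nat.gcd (m * c) r = c := by
      have : Nat.gcd (m * c) (e * c) = c := by
        rw [Nat.gcd_mul_right, hcop, one_mul]
      rwa [hec] at this
    have h2 : Nat.gcd (m * c) r = g0 := by
      apply Nat.dvd_antisymm
      · apply Nat.dvd_gcd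
        · have hd1 : Nat.gcd (m * c) r ∣ m * c + n := (Nat.gcd_dvd_right _ r).trans hdvd
          have := Nat.dvd_sub hd1 (Nat.gcd_dvd_left (m * c) r)
          simpa using this
        · exact Nat.gcd_dvd_right _ r
      · apply Nat.dvd_gcd
        · have hd1 : g0 ∣ m * c + n := hg0r.trans hdvd
          have := Nat.dvd_sub hd1 hg0n
          simpa using this
        · exact hg0r
      -- g0 = gcd n r
    have hcg0 : c = g0 := by rw [← h1, h2]
    have : e * g0 = r := by rw [← hcg0]; exact hec
    rw [he0def, ← this, Nat.mul_div_cancel _ hg0pos]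
  have he0div : e0 ∈ r.divisors := Nat.mem_divisors.mpr ⟨Nat.div_dvd_of_dvd hg0r, hrne⟩
  have hre0 : r / e0 = g0 := Nat.div_div_self hg0r hrne
  -- the unique m
  set m0 : ℕ := if n' % e0 = 0 then e0 else e0 - n' % e0 with hm0def
  have hm0range : 1 ≤ m0 ∧ m0 ≤ e0 := by
    rw [hm0def]
    split_ifs with hc
    · exact ⟨he0pos, le_refl _⟩
    · have := Nat.mod_lt n' he0pos
      omega
  have hm0dvd : e0 ∣ m0 + n' := by
    rw [hm0def]
    split_ifs with hc
    · exact Dvd.dvd.add dvd_rfl (Nat.dvd_of_mod_eq_zero hc)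
    · have hlt := Nat.mod_lt n' he0pos
      apply Nat.dvd_of_mod_eq_zero
      have h1 : (e0 - n' % e0) % e0 = e0 - n' % e0 := Nat.mod_eq_of_lt (by omega)
      rw [Nat.add_mod, h1]
      have h2 : e0 - n' % e0 + n' % e0 = e0 := by omega
      rw [h2, Nat.mod_self]
  have hm0uniq : ∀ m : ℕ, 1 ≤ m → m ≤ e0 → e0 ∣ m + n' → m = m0 := by
    intro m hm1 hme hdv
    have d1 : e0 ∣ (m + n') - (m0 + n') := Nat.dvd_sub hdv hm0dvd
    have d2 : e0 ∣ (m0 + n') - (m + n') := Nat.dvd_sub hm0dvd hdv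
    have e1 : (m + n') - (m0 + n') = m - m0 := by omega
    have e2 : (m0 + n') - (m + n') = m0 - m := by omega
    rw [e1] at d1
    rw [e2] at d2
    have hb1 : m - m0 < e0 := by omega
    have hb2 : m0 - m < e0 := by omega
    have z1 : m - m0 = 0 := by
      by_contra hne
      exact absurd (Nat.le_of_dvd (Nat.pos_of_ne_zero hne) d1) (by omega)
    have z2 : m0 - m = 0 := by
      by_contra hne
      exact absurd (Nat.le_of_dvd (Nat.pos_of_ne_zero hne) d2) (by omega)
    omega
  have hm0cop : Nat.gcd m0 e0 = 1 := by
    have hd : Nat.gcd m0 e0 ∣ n' := by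
      have h1 : Nat.gcd m0 e0 ∣ m0 + n' := (Nat.gcd_dvd_right m0 e0).trans hm0dvd
      have := Nat.dvd_sub h1 (Nat.gcd_dvd_left m0 e0)
      simpa using this
    have : Nat.gcd m0 e0 ∣ 1 := by
      rw [← hn'e0]
      exact Nat.dvd_gcd hd (Nat.gcd_dvd_right m0 e0)
    exact Nat.dvd_one.mp this
  -- main computation
  have stepB : ∑ j ∈ Finset.Icc 1 r,
      f j * Complex.exp (2 * (Real.pi : ℂ) * Complex.I * (j : ℂ) * (n : ℂ) / (r : ℂ))
      = (r : ℂ) * g e0 := by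
    have hterm : ∀ j ∈ Finset.Icc 1 r,
        f j * Complex.exp (2 * (Real.pi : ℂ) * Complex.I * (j : ℂ) * (n : ℂ) / (r : ℂ))
        = ∑ e ∈ r.divisors, ∑ m ∈ (Finset.Icc 1 e).filter (fun m => Nat.gcd m e = 1),
            g e * Complex.exp (2 * (Real.pi : ℂ) * Complex.I * (j : ℂ)
              * ((m * (r / e) + n : ℕ) : ℂ) / (r : ℂ)) := by
      intro j hj
      simp only [Finset.mem_Icc] at hj
      rw [h j hj.1, Finset.sum_mul]
      refine Finset.sum_congr rfl ?_
      intro e he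
      simp only [Nat.mem_divisors] at he
      obtain ⟨her, -⟩ := he
      have hepos : 0 < e := Nat.pos_of_dvd_of_pos her hrpos
      have he0' : (e : ℂ) ≠ 0 := by exact_mod_cast hepos.ne'
      unfold ram
      rw [Finset.mul_sum, Finset.sum_mul]
      refine Finset.sum_congr rfl ?_
      intro m hm
      rw [mul_assoc]
      congr 1
      rw [← Complex.exp_add]
      congr 1
      have key : ((r / e : ℕ) : ℂ) * (e : ℂ) = (r : ℂ) := by
        exact_mod_cast congrArg (Nat.cast : ℕ → ℂ) (Nat.div_mul_cancel her)
      push_cast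
      field_simp
      ring_nf
      linear_combination (-(j : ℂ) * (m : ℂ)) * key
    rw [Finset.sum_congr rfl hterm, Finset.sum_comm]
    have hinner : ∀ e ∈ r.divisors,
        ∑ j ∈ Finset.Icc 1 r, ∑ m ∈ (Finset.Icc 1 e).filter (fun m => Nat.gcd m e = 1),
          g e * Complex.exp (2 * (Real.pi : ℂ) * Complex.I * (j : ℂ)
            * ((m * (r / e) + n : ℕ) : ℂ) / (r : ℂ))
        = ∑ m ∈ (Finset.Icc 1 e).filter (fun m => Nat.gcd m e = 1),
            g e * (if r ∣ m * (r / e) + n then (r : ℂ) else 0) := by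
      intro e he
      rw [Finset.sum_comm]
      refine Finset.sum_congr rfl ?_
      intro m hm
      rw [← Finset.mul_sum, sum_exp_eq r hr]
    rw [Finset.sum_congr rfl hinner]
    rw [Finset.sum_eq_single_of_mem e0 he0div]
    · -- value at e0
      rw [Finset.sum_eq_single_of_mem m0]
      · rw [hre0]
        have : r ∣ m0 * g0 + n := by
          rw [← hre, ← hnn']
          have : m0 * g0 + g0 * n' = g0 * (m0 + n') := by ring
          rw [this]
          exact Nat.mul_dvd_mul_left g0 hm0dvd
        rw [if_pos this]
        ring
      · simp only [Finset.mem_filter, Finset.mem_Icc]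
        exact ⟨⟨hm0range.1, hm0range.2⟩, hm0cop⟩
      · intro m hm hne
        simp only [Finset.mem_filter, Finset.mem_Icc] at hm
        rw [hre0, if_neg, mul_zero]
        intro hdv
        apply hne
        apply hm0uniq m hm.1.1 hm.1.2
        rw [← hre, ← hnn'] at hdv
        have heq : m * g0 + g0 * n' = g0 * (m + n') := by ring
        rw [heq] at hdv
        exact (Nat.mul_dvd_mul_iff_left hg0pos).mp hdv
    · intro e he hne
      apply Finset.sum_eq_zero
      intro m hm
      simp only [Finset.mem_filter, Finset.mem_Icc] at hm
      rw [if_neg, mul_zero]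
      intro hdv
      exact hne (condA e he m hm.1.1 hm.1.2 hm.2 hdv)
  rw [stepA, stepB]
  field_simp
end

section
/- Let r ≥ 1 and let g, h be arbitrary arithmetic functions. Define the r-even function S_{g,h}(n) = Σ_{d | gcd(n,r)} g(d) h(r/d). Then the discrete Fourier transform of S_{g,h} satisfies, for every n ≥ 1, Ŝ_{g,h}(n) = Σ_{d | gcd(n,r)} d · g(r/d) h(d). -/
open Finset

lemma gcd_divisors_eq (k r : ℕ) (hr : r ≠ 0) :
    (Nat.gcd k r).divisors = r.divisors.filter (fun d => d ∣ k) := by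
  ext d
  simp only [Nat.mem_divisors, Finset.mem_filter, Nat.dvd_gcd_iff]
  constructor
  · rintro ⟨⟨h1, h2⟩, -⟩; exact ⟨⟨h2, hr⟩, h1⟩
  · rintro ⟨⟨h2, -⟩, h1⟩
    refine ⟨⟨h1, h2⟩, fun heq => ?_⟩
    rw [Nat.gcd_eq_zero_iff] at heq
    exact hr heq.2

lemma exp_sum_eq (m n : ℕ) (hm : m ≠ 0) :
    ∑ j ∈ Finset.Icc 1 m,
        Complex.exp (-(2 * (Real.pi : ℂ) * Complex.I * (j : ℂ) * (n : ℂ) / (m : ℂ))) =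
      if m ∣ n then (m : ℂ) else 0 := by
  have hmC : (m : ℂ) ≠ 0 := Nat.cast_ne_zero.mpr hm
  have hπ : (Real.pi : ℂ) ≠ 0 := by exact_mod_cast Real.pi_ne_zero
  have hI : Complex.I ≠ 0 := Complex.I_ne_zero
  set ζ : ℂ := Complex.exp (-(2 * (Real.pi : ℂ) * Complex.I * (n : ℂ) / (m : ℂ))) with hζ
  have hterm : ∀ j : ℕ,
      Complex.exp (-(2 * (Real.pi : ℂ) * Complex.I * (j : ℂ) * (n : ℂ) / (m : ℂ))) = ζ ^ j := by
    intro j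
    rw [hζ, ← Complex.exp_nat_mul]
    congr 1
    ring
  have hζm : ζ ^ m = 1 := by
    rw [hζ, ← Complex.exp_nat_mul]
    have heq : (m : ℂ) * (-(2 * (Real.pi : ℂ) * Complex.I * (n : ℂ) / (m : ℂ)))
        = ((-(n : ℤ) : ℤ) : ℂ) * (2 * (Real.pi : ℂ) * Complex.I) := by
      push_cast
      field_simp
    rw [heq, Complex.exp_int_mul_two_pi_mul_I]
  have hsum : ∑ j ∈ Finset.Icc 1 m, ζ ^ j = ζ * ∑ j ∈ Finset.range m, ζ ^ j := by
    have h1 : Finset.Icc 1 m = Finset.Ico 1 (m + 1) := by rw [Finset.Ico_add_one_right_eq_Icc]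
    rw [h1, Finset.sum_Ico_eq_sum_range, Finset.mul_sum]
    simp only [Nat.add_sub_cancel]
    exact Finset.sum_congr rfl fun j _ => by rw [pow_add, pow_one]
  rw [Finset.sum_congr rfl fun j _ => hterm j, hsum]
  by_cases hdvd : m ∣ n
  · have hζ1 : ζ = 1 := by
      obtain ⟨c, rfl⟩ := hdvd
      rw [hζ]
      have heq : -(2 * (Real.pi : ℂ) * Complex.I * ((m * c : ℕ) : ℂ) / (m : ℂ))
          = ((-(c : ℤ) : ℤ) : ℂ) * (2 * (Real.pi : ℂ) * Complex.I) := by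
        push_cast
        field_simp
      rw [heq, Complex.exp_int_mul_two_pi_mul_I]
    simp [hζ1, hdvd]
  · have hζne : ζ ≠ 1 := by
      intro h1
      rw [hζ, Complex.exp_eq_one_iff] at h1
      obtain ⟨k, hk⟩ := h1
      have h2 : (2 * (Real.pi : ℂ) * Complex.I) ≠ 0 := by
        simp [hπ, hI]
      have hmul : (2 * (Real.pi : ℂ) * Complex.I) * (-(n : ℂ))
          = (2 * (Real.pi : ℂ) * Complex.I) * ((k : ℂ) * (m : ℂ)) := by
        field_simp at hk
        linear_combination (2 * (Real.pi : ℂ) * Complex.I) * hk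
      have hcan := mul_left_cancel₀ h2 hmul
      have hnk' : (n : ℤ) = -k * m := by
        have : ((n : ℤ) : ℂ) = ((-k * m : ℤ) : ℂ) := by push_cast; linear_combination -hcan
        exact_mod_cast this
      apply hdvd
      have hdz : (m : ℤ) ∣ (n : ℤ) := ⟨-k, by rw [hnk']; ring⟩
      exact_mod_cast hdz
    rw [geom_sum_eq hζne, hζm]
    simp [hdvd]

lemma inner_sum_eq (d r n : ℕ) (hd : d ∣ r) (hr : r ≠ 0) :
    ∑ k ∈ (Finset.Icc 1 r).filter (fun k => d ∣ k),
        Complex.exp (-(2 * (Real.pi : ℂ) * Complex.I * (k : ℂ) * (n : ℂ) / (r : ℂ))) =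
      if (r / d) ∣ n then ((r / d : ℕ) : ℂ) else 0 := by
  have hd0 : d ≠ 0 := by rintro rfl; exact hr (Nat.eq_zero_of_zero_dvd hd)
  set m := r / d with hm
  have hrm : r = d * m := by rw [hm]; exact (Nat.mul_div_cancel' hd).symm
  have hm0 : m ≠ 0 := by rintro h; rw [h, mul_zero] at hrm; exact hr hrm
  rw [← exp_sum_eq m n hm0]
  symm
  refine Finset.sum_bij' (fun j (_ : j ∈ Finset.Icc 1 m) => d * j)
    (fun k (_ : k ∈ (Finset.Icc 1 r).filter (fun k => d ∣ k)) => k / d) ?_ ?_ ?_ ?_ ?_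
  · intro j hj
    simp only [Finset.mem_filter, Finset.mem_Icc] at hj ⊢
    obtain ⟨hj1, hj2⟩ := hj
    refine ⟨⟨?_, ?_⟩, Dvd.intro j rfl⟩
    · have := Nat.pos_of_ne_zero hd0; nlinarith
    · rw [hrm]; exact Nat.mul_le_mul_left d hj2
  · intro k hk
    simp only [Finset.mem_filter, Finset.mem_Icc] at hk ⊢
    obtain ⟨⟨hk1, hk2⟩, hkd⟩ := hk
    constructor
    · exact (Nat.one_le_div_iff (Nat.pos_of_ne_zero hd0)).mpr (Nat.le_of_dvd (by omega) hkd)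
    · rw [hrm] at hk2
      calc k / d ≤ d * m / d := Nat.div_le_div_right hk2
        _ = m := Nat.mul_div_cancel_left m (Nat.pos_of_ne_zero hd0)
  · intro j _; exact Nat.mul_div_cancel_left j (Nat.pos_of_ne_zero hd0)
  · intro k hk
    simp only [Finset.mem_filter] at hk
    exact Nat.mul_div_cancel' hk.2
  · intro j _
    congr 1
    have hdC : (d : ℂ) ≠ 0 := Nat.cast_ne_zero.mpr hd0
    have hmC : (m : ℂ) ≠ 0 := Nat.cast_ne_zero.mpr hm0
    rw [hrm]
    push_cast
    field_simp

/-- For `S_{g,h}(n) = Σ_{d | gcd(n,r)} g(d) h(r/d)` one has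
`Ŝ_{g,h}(n) = Σ_{d | gcd(n,r)} d·g(r/d)·h(d)`. -/
theorem dft_stmt_11 (r : ℕ) (hr : 1 ≤ r) (g h : ℕ → ℂ) (n : ℕ) (hn : 1 ≤ n) :
    dft r (fun m => ∑ d ∈ (Nat.gcd m r).divisors, g d * h (r / d)) n =
      ∑ d ∈ (Nat.gcd n r).divisors, (d : ℂ) * g (r / d) * h d := by
  have hr0 : r ≠ 0 := by omega
  simp only [dft]
  have step1 :
      ∑ k ∈ Finset.Icc 1 r,
          (∑ d ∈ (Nat.gcd k r).divisors, g d * h (r / d)) *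
            Complex.exp (-(2 * (Real.pi : ℂ) * Complex.I * (k : ℂ) * (n : ℂ) / (r : ℂ)))
        = ∑ d ∈ r.divisors, g d * h (r / d) *
            ∑ k ∈ (Finset.Icc 1 r).filter (fun k => d ∣ k),
              Complex.exp (-(2 * (Real.pi : ℂ) * Complex.I * (k : ℂ) * (n : ℂ) / (r : ℂ))) := by
    have hswap : ∀ k ∈ Finset.Icc 1 r,
        (∑ d ∈ (Nat.gcd k r).divisors, g d * h (r / d)) *
            Complex.exp (-(2 * (Real.pi : ℂ) * Complex.I * (k : ℂ) * (n : ℂ) / (r : ℂ)))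
          = ∑ d ∈ r.divisors,
              (if d ∣ k then g d * h (r / d) *
                Complex.exp (-(2 * (Real.pi : ℂ) * Complex.I * (k : ℂ) * (n : ℂ) / (r : ℂ))) else 0) := by
      intro k _
      rw [gcd_divisors_eq k r hr0, Finset.sum_filter, Finset.sum_mul]
      exact Finset.sum_congr rfl fun d _ => by split <;> simp
    rw [Finset.sum_congr rfl hswap, Finset.sum_comm]
    refine Finset.sum_congr rfl fun d _ => ?_
    rw [Finset.mul_sum, Finset.sum_filter]
  rw [step1]
  have step2 : ∀ d ∈ r.divisors,
      g d * h (r / d) *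
          ∑ k ∈ (Finset.Icc 1 r).filter (fun k => d ∣ k),
            Complex.exp (-(2 * (Real.pi : ℂ) * Complex.I * (k : ℂ) * (n : ℂ) / (r : ℂ)))
        = g (r / (r / d)) * h (r / d) * (if (r / d) ∣ n then ((r / d : ℕ) : ℂ) else 0) := by
    intro d hd
    rw [Nat.mem_divisors] at hd
    rw [inner_sum_eq d r n hd.1 hr0, Nat.div_div_self hd.1 hd.2]
  rw [Finset.sum_congr rfl step2]
  have step3 : ∑ d ∈ r.divisors,
      g (r / (r / d)) * h (r / d) * (if (r / d) ∣ n then ((r / d : ℕ) : ℂ) else 0)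
      = ∑ d ∈ r.divisors, g (r / d) * h d * (if d ∣ n then ((d : ℕ) : ℂ) else 0) :=
    Nat.sum_div_divisors r (fun e => g (r / e) * h e * (if e ∣ n then ((e : ℕ) : ℂ) else 0))
  rw [step3, gcd_divisors_eq n r hr0, Finset.sum_filter]
  refine Finset.sum_congr rfl fun d _ => ?_
  by_cases hdn : d ∣ n
  · simp only [if_pos hdn]; ring
  · simp [hdn]
end

section
/- Let r ≥ 1 and let f be an r-even arithmetic function. Then Σ_{n=1}^{r} |f̂(n)|² = r · Σ_{d|r} |f(d)|² φ(r/d), where φ is Euler's totient function. -/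
open Finset

lemma dft_ortho (r : ℕ) (hr : 1 ≤ r) (k l : ℕ) (hk : k ∈ Finset.Icc 1 r) (hl : l ∈ Finset.Icc 1 r) :
    ∑ n ∈ Finset.Icc 1 r,
      Complex.exp (2 * (Real.pi : ℂ) * Complex.I * ((l : ℂ) - (k : ℂ)) / (r : ℂ)) ^ n =
      if k = l then (r : ℂ) else 0 := by
  have hr0 : (r : ℂ) ≠ 0 := Nat.cast_ne_zero.2 (by omega)
  have hpi : (Real.pi : ℂ) ≠ 0 := by exact_mod_cast Real.pi_ne_zero
  have h2pi : (2 * (Real.pi : ℂ) * Complex.I) ≠ 0 := by simp [hpi, Complex.I_ne_zero]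
  have hk' := Finset.mem_Icc.1 hk
  have hl' := Finset.mem_Icc.1 hl
  set z := Complex.exp (2 * (Real.pi : ℂ) * Complex.I * ((l : ℂ) - (k : ℂ)) / (r : ℂ)) with hz
  by_cases hkl : k = l
  · subst hkl
    simp [hz, Complex.exp_zero]
  · rw [if_neg hkl]
    have hz1 : z ≠ 1 := by
      intro h
      rw [hz, Complex.exp_eq_one_iff] at h
      obtain ⟨m, hm⟩ := h
      have h2 : ((l : ℂ) - (k : ℂ)) = (r : ℂ) * m := by
        field_simp at hm
        apply mul_left_cancel₀ h2pi
        linear_combination (2 * (Real.pi : ℂ) * Complex.I) * hm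
      have hd : (r : ℤ) ∣ (l : ℤ) - k := ⟨m, by exact_mod_cast h2⟩
      have h0 : (l : ℤ) - k = 0 := by
        by_contra h0
        have h1 : (r : ℤ) ≤ |(l : ℤ) - k| := Int.le_of_dvd (abs_pos.2 h0) ((dvd_abs _ _).2 hd)
        have h3 : |(l : ℤ) - k| < r := abs_lt.2 (by omega)
        omega
      exact hkl (by omega)
    have hzr : z ^ r = 1 := by
      rw [hz, ← Complex.exp_nat_mul, Complex.exp_eq_one_iff]
      refine ⟨(l : ℤ) - k, ?_⟩
      push_cast
      field_simp
    rw [← Finset.Ico_add_one_right_eq_Icc, geom_sum_Ico hz1 (by omega), pow_succ, hzr, one_mul, pow_one,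
      sub_self, zero_div]

/-- Parseval formula for `r`-even functions:
`Σ_{n=1}^{r} |f̂(n)|² = r · Σ_{d|r} |f(d)|² φ(r/d)`. -/
theorem dft_stmt_12 (r : ℕ) (hr : 1 ≤ r) (f : ℕ → ℂ) (hf : IsREven r f) :
    ∑ n ∈ Finset.Icc 1 r, ‖dft r f n‖ ^ 2 =
      (r : ℝ) * ∑ d ∈ r.divisors, ‖f d‖ ^ 2 * ((Nat.totient (r / d) : ℕ) : ℝ) := by
  have hr0 : r ≠ 0 := by omega
  -- Per-term product identity
  have hterm : ∀ k l n : ℕ,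
      (f k * Complex.exp (-(2 * (Real.pi : ℂ) * Complex.I * (k : ℂ) * (n : ℂ) / (r : ℂ)))) *
        (starRingEnd ℂ) (f l * Complex.exp (-(2 * (Real.pi : ℂ) * Complex.I * (l : ℂ) * (n : ℂ) / (r : ℂ)))) =
      (f k * (starRingEnd ℂ) (f l)) *
        Complex.exp (2 * (Real.pi : ℂ) * Complex.I * ((l : ℂ) - (k : ℂ)) / (r : ℂ)) ^ n := by
    intro k l n
    rw [map_mul, ← Complex.exp_conj, ← Complex.exp_nat_mul, mul_mul_mul_comm, ← Complex.exp_add]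
    congr 1
    simp only [map_neg, map_div₀, map_mul, Complex.conj_I, map_ofNat, Complex.conj_ofReal,
      map_natCast]
    ring
  -- Parseval at the complex level
  have main : ∑ n ∈ Finset.Icc 1 r, dft r f n * (starRingEnd ℂ) (dft r f n) =
      (r : ℂ) * ∑ k ∈ Finset.Icc 1 r, f k * (starRingEnd ℂ) (f k) := by
    unfold dft
    have step : ∀ n : ℕ,
        (∑ k ∈ Finset.Icc 1 r, f k * Complex.exp (-(2 * (Real.pi : ℂ) * Complex.I * (k : ℂ) * (n : ℂ) / (r : ℂ)))) *
          (starRingEnd ℂ) (∑ k ∈ Finset.Icc 1 r, f k * Complex.exp (-(2 * (Real.pi : ℂ) * Complex.I * (k : ℂ) * (n : ℂ) / (r : ℂ)))) =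
        ∑ k ∈ Finset.Icc 1 r, ∑ l ∈ Finset.Icc 1 r, (f k * (starRingEnd ℂ) (f l)) *
          Complex.exp (2 * (Real.pi : ℂ) * Complex.I * ((l : ℂ) - (k : ℂ)) / (r : ℂ)) ^ n := by
      intro n
      rw [map_sum, Finset.sum_mul_sum]
      exact Finset.sum_congr rfl fun k _ => Finset.sum_congr rfl fun l _ => hterm k l n
    calc ∑ n ∈ Finset.Icc 1 r, _ * (starRingEnd ℂ) _
        = ∑ n ∈ Finset.Icc 1 r, ∑ k ∈ Finset.Icc 1 r, ∑ l ∈ Finset.Icc 1 r, (f k * (starRingEnd ℂ) (f l)) *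
            Complex.exp (2 * (Real.pi : ℂ) * Complex.I * ((l : ℂ) - (k : ℂ)) / (r : ℂ)) ^ n :=
          Finset.sum_congr rfl fun n _ => step n
      _ = ∑ k ∈ Finset.Icc 1 r, ∑ l ∈ Finset.Icc 1 r, (f k * (starRingEnd ℂ) (f l)) *
            ∑ n ∈ Finset.Icc 1 r,
              Complex.exp (2 * (Real.pi : ℂ) * Complex.I * ((l : ℂ) - (k : ℂ)) / (r : ℂ)) ^ n := by
          rw [Finset.sum_comm]
          refine Finset.sum_congr rfl fun k _ => ?_
          rw [Finset.sum_comm]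
          exact Finset.sum_congr rfl fun l _ => (Finset.mul_sum _ _ _).symm
      _ = ∑ k ∈ Finset.Icc 1 r, (f k * (starRingEnd ℂ) (f k)) * r := by
          refine Finset.sum_congr rfl fun k hk => ?_
          rw [Finset.sum_congr rfl fun l hl => by rw [dft_ortho r hr k l hk hl]]
          simp [mul_ite, mul_zero, Finset.sum_ite_eq, hk]
      _ = (r : ℂ) * ∑ k ∈ Finset.Icc 1 r, f k * (starRingEnd ℂ) (f k) := by
          rw [← Finset.sum_mul, mul_comm]
  -- Real-level Parseval
  have step1 : ∑ n ∈ Finset.Icc 1 r, ‖dft r f n‖ ^ 2 =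
      (r : ℝ) * ∑ k ∈ Finset.Icc 1 r, ‖f k‖ ^ 2 := by
    simp only [Complex.mul_conj] at main
    simp only [Complex.sq_norm]
    exact_mod_cast main
  rw [step1]
  congr 1
  -- Step 2: r-even counting
  have heven : ∀ k ∈ Finset.Icc 1 r, ‖f k‖ ^ 2 = ‖f (Nat.gcd r k)‖ ^ 2 := by
    intro k hk
    rw [Nat.gcd_comm, hf k (Finset.mem_Icc.1 hk).1]
  rw [Finset.sum_congr rfl heven]
  have hshift : ∑ k ∈ Finset.Icc 1 r, ‖f (Nat.gcd r k)‖ ^ 2 =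
      ∑ k ∈ Finset.range r, ‖f (Nat.gcd r k)‖ ^ 2 := by
    have e1 : ∑ k ∈ Finset.Icc 1 r, ‖f (Nat.gcd r k)‖ ^ 2 =
        ∑ k ∈ Finset.Ico 1 r, ‖f (Nat.gcd r k)‖ ^ 2 +
          ‖f (Nat.gcd r r)‖ ^ 2 := by
      rw [← Finset.Ico_add_one_right_eq_Icc, Finset.sum_Ico_succ_top (by omega)]
    have e2 : ∑ k ∈ Finset.range r, ‖f (Nat.gcd r k)‖ ^ 2 =
        ‖f (Nat.gcd r 0)‖ ^ 2 +
          ∑ k ∈ Finset.Ico 1 r, ‖f (Nat.gcd r k)‖ ^ 2 := by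
      rw [Finset.range_eq_Ico, Finset.sum_eq_sum_Ico_succ_bot (by omega)]
    rw [e1, e2, Nat.gcd_self, Nat.gcd_zero_right]
    ring
  rw [hshift]
  rw [← Finset.sum_fiberwise_of_maps_to (g := fun k => Nat.gcd r k)
    (fun k _ => Nat.mem_divisors.2 ⟨Nat.gcd_dvd_left r k, hr0⟩)]
  refine Finset.sum_congr rfl fun d hd => ?_
  have hcard := Nat.totient_div_of_dvd (Nat.dvd_of_mem_divisors hd)
  rw [Finset.sum_congr rfl (fun k hk => by rw [(Finset.mem_filter.1 hk).2]),
    Finset.sum_const, hcard]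
  simp [mul_comm]
end
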